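/- arXiv:1102.4218 — 4 statements merged into one kernel-verified Lean document; each statement's English description precedes it below -/
import Mathlib

section
/- Let r ≥ 1 and ℓ ≥ 2 be integers, p = r+2ℓ−1, q = r+ℓ−1. There is a constant c such that for every α > 0 and every w ∈ H^{p+1} with ‖w‖_{H^q} ≤ α, the H^p inner product satisfies |(w, w w_x)_{H^p}| ≤ c α ‖w‖²_{H^p}. -/
open MeasureTheory Set

/-- The `L²`-based Sobolev norm of integer order `s` on `ℝ`,
`‖v‖_{H^s}² = ∑_{j=0}^s ‖∂_x^j v‖_{L²}²`. -/
noncomputable def sobolevNorm (s : ℕ) (f : ℝ → ℝ) : ℝ :=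
  Real.sqrt (∑ j ∈ Finset.range (s + 1), ∫ x : ℝ, (iteratedDeriv j f x) ^ 2)

/-- Membership in the Sobolev space `H^s(ℝ)` (strong/classical version). -/
def MemH (s : ℕ) (f : ℝ → ℝ) : Prop :=
  ContDiff ℝ (s : ℕ∞) f ∧ ∀ j ≤ s, MemLp (iteratedDeriv j f) 2 volume

/-- `w` is a strong solution of the inviscid Burgers equation `w_t = w w_x` on `[0, T]`. -/
def IsBurgersSolOn (w : ℝ → ℝ → ℝ) (T : ℝ) : Prop :=
  ∀ t ∈ Set.Icc (0 : ℝ) T, ∀ x : ℝ,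
    HasDerivAt (fun τ => w τ x) (w t x * deriv (w t) x) t

open Filter Topology
open scoped ENNReal

/-- Product of two L² functions is integrable. -/
lemma l2_mul_integrable {f g : ℝ → ℝ} (hf : MemLp f 2 (volume : Measure ℝ))
    (hg : MemLp g 2 (volume : Measure ℝ)) :
    Integrable (fun x => f x * g x) := by
  have h : MemLp (g • f) 1 volume := hf.smul hg
  rw [memLp_one_iff_integrable] at h
  have : (g • f) = fun x => f x * g x := by
    funext x; simp [Pi.smul_apply', smul_eq_mul, mul_comm]
  rwa [this] at h

/-- Cauchy–Schwarz for integrals on ℝ. -/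
lemma integral_abs_mul_le {f g : ℝ → ℝ}
    (hf2 : Integrable (fun x => f x ^ 2) (volume : Measure ℝ))
    (hg2 : Integrable (fun x => g x ^ 2) (volume : Measure ℝ))
    (hfg : Integrable (fun x => f x * g x) (volume : Measure ℝ)) :
    ∫ x : ℝ, |f x| * |g x| ≤
      Real.sqrt (∫ x : ℝ, f x ^ 2) * Real.sqrt (∫ x : ℝ, g x ^ 2) := by
  have habs : (fun x : ℝ => |f x * g x|) = fun x => |f x| * |g x| :=
    funext fun x => abs_mul _ _
  have hfgabs : Integrable (fun x => |f x| * |g x|) (volume : Measure ℝ) := habs ▸ hfg.abs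
  set A := ∫ x : ℝ, f x ^ 2 with hA
  set C := ∫ x : ℝ, g x ^ 2 with hC
  set B := ∫ x : ℝ, |f x| * |g x| with hB
  have hA0 : 0 ≤ A := integral_nonneg fun x => sq_nonneg _
  have hC0 : 0 ≤ C := integral_nonneg fun x => sq_nonneg _
  have hB0 : 0 ≤ B := integral_nonneg fun x => mul_nonneg (abs_nonneg _) (abs_nonneg _)
  have key : ∀ t : ℝ, 0 ≤ A * (t * t) + (2 * B) * t + C := by
    intro t
    have h1 : Integrable (fun x => f x ^ 2 * (t * t)) volume := hf2.mul_const _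
    have h2 : Integrable (fun x => 2 * t * (|f x| * |g x|)) volume := hfgabs.const_mul _
    have expand : A * (t * t) + (2 * B) * t + C
        = ∫ x : ℝ, (t * |f x| + |g x|) ^ 2 := by
      calc A * (t * t) + (2 * B) * t + C
          = (∫ x : ℝ, f x ^ 2 * (t * t)) + ((∫ x : ℝ, 2 * t * (|f x| * |g x|)) + ∫ x : ℝ, g x ^ 2) := by
            rw [hA, hB, hC, integral_mul_const, integral_const_mul]; ring
        _ = ∫ x : ℝ, (f x ^ 2 * (t * t) + (2 * t * (|f x| * |g x|) + g x ^ 2)) := by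
            have e2 := integral_add h1 (h2.add hg2)
            simp only [Pi.add_apply] at e2
            rw [e2, integral_add h2 hg2]
        _ = ∫ x : ℝ, (t * |f x| + |g x|) ^ 2 := by
            congr 1; funext x
            linear_combination (-(t * t)) * sq_abs (f x) - sq_abs (g x)
    have hn : 0 ≤ ∫ x : ℝ, (t * |f x| + |g x|) ^ 2 := integral_nonneg fun x => sq_nonneg _
    linarith [expand ▸ hn]
  have hdisc := discrim_le_zero key
  rw [discrim] at hdisc
  have hBsq : B ^ 2 ≤ A * C := by nlinarith
  calc B = Real.sqrt (B ^ 2) := (Real.sqrt_sq hB0).symm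
    _ ≤ Real.sqrt (A * C) := Real.sqrt_le_sqrt hBsq
    _ = Real.sqrt A * Real.sqrt C := Real.sqrt_mul hA0 _

/-- An H¹ function on ℝ is pointwise bounded: `f x ^ 2 ≤ 2 ‖f‖₂ ‖f'‖₂`. -/
lemma sq_le_two_mul_sqrt {f f' : ℝ → ℝ}
    (hd : ∀ y : ℝ, HasDerivAt f (f' y) y)
    (h2 : MemLp f 2 (volume : Measure ℝ)) (h2' : MemLp f' 2 (volume : Measure ℝ)) (x : ℝ) :
    f x ^ 2 ≤ 2 * (Real.sqrt (∫ y : ℝ, f y ^ 2) * Real.sqrt (∫ y : ℝ, f' y ^ 2)) := by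
  have hff' : Integrable (fun y => f y * f' y) volume := l2_mul_integrable h2 h2'
  have hf2 : Integrable (fun y => f y ^ 2) volume := by
    have := l2_mul_integrable h2 h2
    simpa [sq] using this
  have hI : Integrable (fun y => 2 * (f y * f' y)) volume := hff'.const_mul 2
  -- FTC for f²
  have hg : ∀ y : ℝ, HasDerivAt (fun z => f z ^ 2) (2 * (f y * f' y)) y := by
    intro y
    have := (hd y).fun_pow 2
    simpa [pow_one, mul_comm, mul_assoc, mul_left_comm] using this
  have ftc : ∀ a b : ℝ, (∫ y in a..b, 2 * (f y * f' y)) = f b ^ 2 - f a ^ 2 := fun a b =>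
    intervalIntegral.integral_eq_sub_of_hasDerivAt (fun y _ => hg y) hI.intervalIntegrable
  set I := ∫ y : ℝ, |2 * (f y * f' y)| with hIdef
  have hIbound : ∀ a b : ℝ, |∫ y in a..b, 2 * (f y * f' y)| ≤ I := by
    intro a b
    rcases le_total a b with hab | hab
    · refine (intervalIntegral.abs_integral_le_integral_abs hab).trans ?_
      rw [intervalIntegral.integral_of_le hab]
      exact setIntegral_le_integral hI.abs (Eventually.of_forall fun y => abs_nonneg _)
    · rw [intervalIntegral.integral_symm, abs_neg]
      refine (intervalIntegral.abs_integral_le_integral_abs hab).trans ?_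
      rw [intervalIntegral.integral_of_le hab]
      exact setIntegral_le_integral hI.abs (Eventually.of_forall fun y => abs_nonneg _)
  -- f x ^ 2 ≤ I
  have key : f x ^ 2 ≤ I := by
    by_contra hcon
    push_neg at hcon
    set ε := f x ^ 2 - I with hε
    have hε0 : 0 < ε := by linarith
    have hlow : ∀ y : ℝ, ε ≤ f y ^ 2 := by
      intro y
      have h1 := ftc y x
      have h2b := hIbound y x
      have : f x ^ 2 - f y ^ 2 ≤ I := by
        rw [← h1]; exact (le_abs_self _).trans h2b
      linarith
    have : Integrable (fun _ : ℝ => ε) volume := by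
      refine Integrable.mono' hf2 aestronglyMeasurable_const ?_
      refine Eventually.of_forall fun y => ?_
      rw [Real.norm_eq_abs, abs_of_pos hε0]
      exact hlow y
    rw [integrable_const_iff] at this
    rcases this with h | h
    · exact hε0.ne' h
    · have h := measure_lt_top (volume : Measure ℝ) univ
      rw [Real.volume_univ] at h; exact (lt_irrefl _ h).elim
  -- now Cauchy–Schwarz
  have hCS : I ≤ 2 * (Real.sqrt (∫ y : ℝ, f y ^ 2) * Real.sqrt (∫ y : ℝ, f' y ^ 2)) := by
    have hf'2 : Integrable (fun y => f' y ^ 2) volume := by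
      have := l2_mul_integrable h2' h2'
      simpa [sq] using this
    have hcs := integral_abs_mul_le hf2 hf'2 hff'
    have : I = ∫ y : ℝ, 2 * (|f y| * |f' y|) := by
      rw [hIdef]; congr 1; funext y
      rw [abs_mul, abs_mul, abs_two]
    rw [this, integral_const_mul]
    linarith [hcs]
  linarith

/-- If an integrable function tends to a limit at `atTop`, the limit is 0. -/
lemma limit_zero_atTop {F : ℝ → ℝ} {L : ℝ} (hF : Integrable F (volume : Measure ℝ))
    (h : Tendsto F atTop (𝓝 L)) : L = 0 := by
  by_contra hL
  have hpos : 0 < |L| / 2 := by positivity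
  have hev : ∀ᶠ x in (atTop : Filter ℝ), |L| / 2 ≤ |F x| := by
    filter_upwards [h.eventually (Metric.ball_mem_nhds L hpos)] with x hx
    rw [Real.dist_eq] at hx
    have := abs_sub_abs_le_abs_sub (F x) L
    rw [abs_sub_comm] at hx
    have h2 := abs_sub_abs_le_abs_sub L (F x)
    linarith
  rcases eventually_atTop.mp hev with ⟨a, ha⟩
  have hconst : Integrable (fun _ : ℝ => |L| / 2) (volume.restrict (Ici a)) := by
    refine Integrable.mono' (hF.abs.restrict (s := Ici a)) aestronglyMeasurable_const ?_
    rw [ae_restrict_iff' measurableSet_Ici]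
    exact Eventually.of_forall fun y hy => by
      rw [Real.norm_eq_abs, abs_of_pos hpos]; exact ha y hy
  rw [integrable_const_iff] at hconst
  rcases hconst with h0 | h0
  · exact absurd h0 (by positivity)
  · have h0 := measure_lt_top (volume.restrict (Ici a)) univ
    rw [Measure.restrict_apply_univ, Real.volume_Ici] at h0
    exact (lt_irrefl _ h0).elim

lemma limit_zero_atBot {F : ℝ → ℝ} {L : ℝ} (hF : Integrable F (volume : Measure ℝ))
    (h : Tendsto F atBot (𝓝 L)) : L = 0 := by
  have hF' : Integrable (fun x : ℝ => F (-x)) volume := hF.comp_neg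
  refine limit_zero_atTop hF' ?_
  exact h.comp tendsto_neg_atTop_atBot

/-- If `F` is differentiable with derivative `F'`, both integrable, then `∫ F' = 0`. -/
lemma integral_deriv_eq_zero' {F F' : ℝ → ℝ}
    (hd : ∀ x : ℝ, HasDerivAt F (F' x) x)
    (hF : Integrable F (volume : Measure ℝ)) (hF' : Integrable F' (volume : Measure ℝ)) :
    ∫ x : ℝ, F' x = 0 := by
  have ftc : ∀ a b : ℝ, (∫ y in a..b, F' y) = F b - F a := fun a b =>
    intervalIntegral.integral_eq_sub_of_hasDerivAt (fun y _ => hd y) hF'.intervalIntegrable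
  -- limit at +∞
  have hTop : Tendsto F atTop (𝓝 (F 0 + ∫ y in Ioi (0:ℝ), F' y)) := by
    have h1 := intervalIntegral_tendsto_integral_Ioi 0 hF'.integrableOn (tendsto_id (α := ℝ))
    have h2 : Tendsto (fun b : ℝ => F 0 + ∫ y in (0:ℝ)..(id b), F' y) atTop
        (𝓝 (F 0 + ∫ y in Ioi (0:ℝ), F' y)) := tendsto_const_nhds.add h1
    exact Filter.Tendsto.congr (fun b => by rw [id_eq, ftc 0 b]; ring) h2
  have hLtop := limit_zero_atTop hF hTop
  -- limit at -∞
  have hBot : Tendsto F atBot (𝓝 (F 0 - ∫ y in Iic (0:ℝ), F' y)) := by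
    have h1 := intervalIntegral_tendsto_integral_Iic 0 hF'.integrableOn (tendsto_id (α := ℝ))
    have h2 : Tendsto (fun a : ℝ => F 0 - ∫ y in (id a)..(0:ℝ), F' y) atBot
        (𝓝 (F 0 - ∫ y in Iic (0:ℝ), F' y)) := tendsto_const_nhds.sub h1
    exact Filter.Tendsto.congr (fun a => by rw [id_eq, ftc a 0]; ring) h2
  have hLbot := limit_zero_atBot hF hBot
  have := intervalIntegral.integral_Iic_add_Ioi (b := (0:ℝ)) hF'.integrableOn hF'.integrableOn
  rw [← this]
  linarith

/-- Leibniz rule for iterated derivatives of a product. -/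
lemma iteratedDeriv_mul_eq {n : ℕ} {f g : ℝ → ℝ}
    (hf : ContDiff ℝ (n : ℕ∞) f) (hg : ContDiff ℝ (n : ℕ∞) g) :
    iteratedDeriv n (fun y => f y * g y) = fun x =>
      ∑ i ∈ Finset.range (n + 1), (n.choose i : ℝ) *
        (iteratedDeriv i f x * iteratedDeriv (n - i) g x) := by
  induction n with
  | zero => funext x; simp
  | succ n ih =>
    have hfn : ContDiff ℝ (n : ℕ∞) f := hf.of_le (by exact_mod_cast Nat.le_succ n)
    have hgn : ContDiff ℝ (n : ℕ∞) g := hg.of_le (by exact_mod_cast Nat.le_succ n)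
    funext x
    rw [iteratedDeriv_succ, ih hfn hgn]
    have hder : HasDerivAt
        (fun y => ∑ i ∈ Finset.range (n + 1), (n.choose i : ℝ) *
          (iteratedDeriv i f y * iteratedDeriv (n - i) g y))
        (∑ i ∈ Finset.range (n + 1), (n.choose i : ℝ) *
          (iteratedDeriv (i + 1) f x * iteratedDeriv (n - i) g x +
           iteratedDeriv i f x * iteratedDeriv (n - i + 1) g x)) x := by
      refine HasDerivAt.fun_sum fun i hi => ?_
      rw [Finset.mem_range, Nat.lt_succ_iff] at hi
      have hfi : HasDerivAt (iteratedDeriv i f) (iteratedDeriv (i + 1) f x) x := by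
        rw [iteratedDeriv_succ]
        exact ((hf.differentiable_iteratedDeriv i
          (Nat.cast_lt.mpr (Nat.lt_succ_of_le hi))) x).hasDerivAt
      have hgi : HasDerivAt (iteratedDeriv (n - i) g) (iteratedDeriv (n - i + 1) g x) x := by
        rw [iteratedDeriv_succ]
        exact ((hg.differentiable_iteratedDeriv (n - i)
          (Nat.cast_lt.mpr (Nat.lt_succ_of_le (Nat.sub_le n i)))) x).hasDerivAt
      exact (hfi.mul hgi).const_mul _
    rw [hder.deriv]
    have hsplit := Finset.sum_choose_succ_mul
      (fun a b => iteratedDeriv a f x * iteratedDeriv b g x) n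
    calc ∑ i ∈ Finset.range (n + 1), (n.choose i : ℝ) *
          (iteratedDeriv (i + 1) f x * iteratedDeriv (n - i) g x +
           iteratedDeriv i f x * iteratedDeriv (n - i + 1) g x)
        = (∑ i ∈ Finset.range (n + 1), (n.choose i : ℝ) *
            (iteratedDeriv i f x * iteratedDeriv (n + 1 - i) g x)) +
          ∑ i ∈ Finset.range (n + 1), (n.choose i : ℝ) *
            (iteratedDeriv (i + 1) f x * iteratedDeriv (n - i) g x) := by
          rw [← Finset.sum_add_distrib]
          refine Finset.sum_congr rfl fun i hi => ?_
          rw [Finset.mem_range, Nat.lt_succ_iff] at hi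
          have h1 : n - i + 1 = n + 1 - i := by omega
          rw [h1]; ring
      _ = ∑ i ∈ Finset.range (n + 1 + 1), ((n + 1).choose i : ℝ) *
            (iteratedDeriv i f x * iteratedDeriv (n + 1 - i) g x) := hsplit.symm

lemma sobolevNorm_nonneg (s : ℕ) (f : ℝ → ℝ) : 0 ≤ sobolevNorm s f := Real.sqrt_nonneg _

lemma sobolevNorm_sq (s : ℕ) (f : ℝ → ℝ) :
    sobolevNorm s f ^ 2 = ∑ j ∈ Finset.range (s + 1), ∫ x : ℝ, (iteratedDeriv j f x) ^ 2 :=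
  Real.sq_sqrt (Finset.sum_nonneg fun j _ => integral_nonneg fun x => sq_nonneg _)

lemma sqrt_term_le_sobolevNorm {j s : ℕ} (hj : j ≤ s) (f : ℝ → ℝ) :
    Real.sqrt (∫ x : ℝ, (iteratedDeriv j f x) ^ 2) ≤ sobolevNorm s f := by
  apply Real.sqrt_le_sqrt
  exact Finset.single_le_sum (f := fun j => ∫ x : ℝ, (iteratedDeriv j f x) ^ 2)
    (fun i _ => integral_nonneg fun x => sq_nonneg _)
    (Finset.mem_range.mpr (Nat.lt_succ_of_le hj))

lemma sobolevNorm_mono {s t : ℕ} (hst : s ≤ t) (f : ℝ → ℝ) :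
    sobolevNorm s f ≤ sobolevNorm t f := by
  apply Real.sqrt_le_sqrt
  exact Finset.sum_le_sum_of_subset_of_nonneg
    (Finset.range_subset_range.mpr (Nat.succ_le_succ hst))
    (fun i _ _ => integral_nonneg fun x => sq_nonneg _)

/-- Sup bound: `|∂^m w x| ≤ ‖w‖_{H^{m+1}}`. -/
lemma abs_iteratedDeriv_le_sobolevNorm {w : ℝ → ℝ} {N m : ℕ}
    (hc : ContDiff ℝ (N : ℕ∞) w)
    (hl : ∀ j ≤ N, MemLp (iteratedDeriv j w) 2 (volume : Measure ℝ))
    (hm : m + 1 ≤ N) (x : ℝ) :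
    |iteratedDeriv m w x| ≤ sobolevNorm (m + 1) w := by
  have hd : ∀ y : ℝ, HasDerivAt (iteratedDeriv m w) (iteratedDeriv (m + 1) w y) y := by
    intro y
    rw [iteratedDeriv_succ]
    exact ((hc.differentiable_iteratedDeriv m
      (by exact_mod_cast Nat.lt_of_lt_of_le (Nat.lt_succ_self m) hm)) y).hasDerivAt
  have h1 := sq_le_two_mul_sqrt hd (hl m (le_trans (Nat.le_succ m) hm)) (hl (m + 1) hm) x
  set a := ∫ y : ℝ, (iteratedDeriv m w y) ^ 2 with ha
  set b := ∫ y : ℝ, (iteratedDeriv (m + 1) w y) ^ 2 with hb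
  have ha0 : 0 ≤ a := integral_nonneg fun y => sq_nonneg _
  have hb0 : 0 ≤ b := integral_nonneg fun y => sq_nonneg _
  have h2 : 2 * (Real.sqrt a * Real.sqrt b) ≤ a + b := by
    nlinarith [sq_nonneg (Real.sqrt a - Real.sqrt b), Real.sq_sqrt ha0, Real.sq_sqrt hb0]
  have h3 : a + b ≤ sobolevNorm (m + 1) w ^ 2 := by
    rw [sobolevNorm_sq]
    rw [Finset.sum_range_succ]
    have h4 : a ≤ ∑ j ∈ Finset.range (m + 1), ∫ x : ℝ, (iteratedDeriv j w x) ^ 2 :=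
      Finset.single_le_sum (f := fun j => ∫ x : ℝ, (iteratedDeriv j w x) ^ 2)
        (fun i _ => integral_nonneg fun x => sq_nonneg _)
        (Finset.mem_range.mpr (Nat.lt_succ_self m))
    linarith
  have h5 : iteratedDeriv m w x ^ 2 ≤ sobolevNorm (m + 1) w ^ 2 := by linarith
  calc |iteratedDeriv m w x| = Real.sqrt (iteratedDeriv m w x ^ 2) := (Real.sqrt_sq_eq_abs _).symm
    _ ≤ Real.sqrt (sobolevNorm (m + 1) w ^ 2) := Real.sqrt_le_sqrt h5
    _ = sobolevNorm (m + 1) w := Real.sqrt_sq (sobolevNorm_nonneg _ _)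

/-- Integrability of a triple product with one bounded factor. -/
lemma triple_integrable {w : ℝ → ℝ} {N a b m : ℕ}
    (hc : ContDiff ℝ (N : ℕ∞) w)
    (hl : ∀ j ≤ N, MemLp (iteratedDeriv j w) 2 (volume : Measure ℝ))
    (ha : a ≤ N) (hb : b ≤ N) (hm : m + 1 ≤ N) :
    Integrable (fun x => iteratedDeriv a w x * iteratedDeriv b w x * iteratedDeriv m w x)
      (volume : Measure ℝ) := by
  have h2 : Integrable (fun x => iteratedDeriv a w x * iteratedDeriv b w x) volume :=
    l2_mul_integrable (hl a ha) (hl b hb)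
  have := h2.bdd_mul ((hl m (le_trans (Nat.le_succ m) hm)).1)
    (c := sobolevNorm (m + 1) w) (Eventually.of_forall fun x => by
      rw [Real.norm_eq_abs]; exact abs_iteratedDeriv_le_sobolevNorm hc hl hm x)
  rw [show (fun x => iteratedDeriv a w x * iteratedDeriv b w x * iteratedDeriv m w x)
    = (fun x => iteratedDeriv m w x * (iteratedDeriv a w x * iteratedDeriv b w x))
    from funext fun x => by ring]
  exact this

/-- Master bound for a triple product. -/
lemma triple_bound {w : ℝ → ℝ} {N a b m : ℕ}
    (hc : ContDiff ℝ (N : ℕ∞) w)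
    (hl : ∀ j ≤ N, MemLp (iteratedDeriv j w) 2 (volume : Measure ℝ))
    (ha : a ≤ N) (hb : b ≤ N) (hm : m + 1 ≤ N) :
    |∫ x : ℝ, iteratedDeriv a w x * iteratedDeriv b w x * iteratedDeriv m w x| ≤
      sobolevNorm (m + 1) w *
        (Real.sqrt (∫ x : ℝ, (iteratedDeriv a w x) ^ 2) *
         Real.sqrt (∫ x : ℝ, (iteratedDeriv b w x) ^ 2)) := by
  set M := sobolevNorm (m + 1) w with hM
  have hM0 : 0 ≤ M := sobolevNorm_nonneg _ _
  have hMb : ∀ x : ℝ, |iteratedDeriv m w x| ≤ M := fun x =>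
    abs_iteratedDeriv_le_sobolevNorm hc hl hm x
  have hint : Integrable (fun x => iteratedDeriv a w x * iteratedDeriv b w x * iteratedDeriv m w x)
      volume := triple_integrable hc hl ha hb hm
  have hab : Integrable (fun x => iteratedDeriv a w x * iteratedDeriv b w x) volume :=
    l2_mul_integrable (hl a ha) (hl b hb)
  have habs : Integrable (fun x => |iteratedDeriv a w x| * |iteratedDeriv b w x|) volume := by
    rw [show (fun x => |iteratedDeriv a w x| * |iteratedDeriv b w x|)
      = (fun x => |iteratedDeriv a w x * iteratedDeriv b w x|)
      from funext fun x => (abs_mul _ _).symm]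
    exact hab.abs
  have step1 : |∫ x : ℝ, iteratedDeriv a w x * iteratedDeriv b w x * iteratedDeriv m w x|
      ≤ ∫ x : ℝ, |iteratedDeriv a w x * iteratedDeriv b w x * iteratedDeriv m w x| := by
    rw [← Real.norm_eq_abs]
    exact (norm_integral_le_integral_norm _).trans
      (le_of_eq (by simp only [Real.norm_eq_abs]))
  have step2 : ∫ x : ℝ, |iteratedDeriv a w x * iteratedDeriv b w x * iteratedDeriv m w x|
      ≤ ∫ x : ℝ, |iteratedDeriv a w x| * |iteratedDeriv b w x| * M := by
    refine integral_mono hint.abs (habs.mul_const M) fun x => ?_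
    rw [abs_mul, abs_mul]
    exact mul_le_mul_of_nonneg_left (hMb x) (by positivity)
  have step3 : ∫ x : ℝ, |iteratedDeriv a w x| * |iteratedDeriv b w x| * M
      = M * ∫ x : ℝ, |iteratedDeriv a w x| * |iteratedDeriv b w x| := by
    rw [integral_mul_const]; ring
  have hfa : Integrable (fun x => (iteratedDeriv a w x) ^ 2) volume := by
    have := l2_mul_integrable (hl a ha) (hl a ha); simpa [sq] using this
  have hfb : Integrable (fun x => (iteratedDeriv b w x) ^ 2) volume := by
    have := l2_mul_integrable (hl b hb) (hl b hb); simpa [sq] using this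
  have step4 := integral_abs_mul_le hfa hfb hab
  calc |∫ x : ℝ, iteratedDeriv a w x * iteratedDeriv b w x * iteratedDeriv m w x|
      ≤ ∫ x : ℝ, |iteratedDeriv a w x * iteratedDeriv b w x * iteratedDeriv m w x| := step1
    _ ≤ ∫ x : ℝ, |iteratedDeriv a w x| * |iteratedDeriv b w x| * M := step2
    _ = M * ∫ x : ℝ, |iteratedDeriv a w x| * |iteratedDeriv b w x| := step3
    _ ≤ M * (Real.sqrt (∫ x : ℝ, (iteratedDeriv a w x) ^ 2) *
         Real.sqrt (∫ x : ℝ, (iteratedDeriv b w x) ^ 2)) :=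
        mul_le_mul_of_nonneg_left step4 hM0

/-- **Energy estimate for the Burgers nonlinearity** (main estimate in the proof of
Lemma 3.1).  With `p = r+2ℓ-1`, `q = r+ℓ-1`:  there is a constant `c` such that for
every `α > 0` and every `w ∈ H^{p+1}` with `‖w‖_{H^q} ≤ α`, the `H^p` inner product
satisfies `|(w, w w_x)_{H^p}| ≤ c α ‖w‖_{H^p}²`. -/
theorem burgers_energy_inner_product_bound (r ℓ : ℕ) (hr : 1 ≤ r) (hℓ : 2 ≤ ℓ) :
    ∃ c : ℝ, ∀ α : ℝ, 0 < α → ∀ w : ℝ → ℝ,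
      MemH (r + 2 * ℓ - 1 + 1) w →
      sobolevNorm (r + ℓ - 1) w ≤ α →
      |∑ j ∈ Finset.range (r + 2 * ℓ - 1 + 1), ∫ x : ℝ,
          iteratedDeriv j w x * iteratedDeriv j (fun y => w y * deriv w y) x|
        ≤ c * α * (sobolevNorm (r + 2 * ℓ - 1) w) ^ 2 := by
  set p := r + 2 * ℓ - 1 with hpdef
  set q := r + ℓ - 1 with hqdef
  have hq2 : 2 ≤ q := by omega
  have hqp : q + ℓ = p := by omega
  refine ⟨∑ j ∈ Finset.range (p + 1), ∑ i ∈ Finset.range (j + 1), (j.choose i : ℝ), ?_⟩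
  intro α hα w hw hwq
  obtain ⟨hc, hl⟩ := hw
  set N := sobolevNorm p w with hNdef
  have hN0 : 0 ≤ N := sobolevNorm_nonneg _ _
  have hαN : 0 ≤ α * N ^ 2 := by positivity
  -- convenient abbreviations for the estimates
  have hNle : ∀ a : ℕ, a ≤ p → Real.sqrt (∫ x : ℝ, (iteratedDeriv a w x) ^ 2) ≤ N :=
    fun a ha => sqrt_term_le_sobolevNorm ha w
  have hQle : ∀ a : ℕ, a ≤ q → Real.sqrt (∫ x : ℝ, (iteratedDeriv a w x) ^ 2) ≤ α :=
    fun a ha => (sqrt_term_le_sobolevNorm ha w).trans hwq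
  have hαle : ∀ m : ℕ, m + 1 ≤ q → sobolevNorm (m + 1) w ≤ α :=
    fun m hm => (sobolevNorm_mono hm w).trans hwq
  have hNSle : ∀ m : ℕ, m + 1 ≤ p → sobolevNorm (m + 1) w ≤ N :=
    fun m hm => sobolevNorm_mono hm w
  have hsqrt0 : ∀ a : ℕ, 0 ≤ Real.sqrt (∫ x : ℝ, (iteratedDeriv a w x) ^ 2) :=
    fun a => Real.sqrt_nonneg _
  -- smoothness of deriv w
  have hder : ContDiff ℝ ((p : ℕ) : ℕ∞) (deriv w) := by
    have h1 : ContDiff ℝ ((p + 1 : ℕ) : WithTop ℕ∞) w := by exact_mod_cast hc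
    have h2 := ContDiff.iterate_deriv' p 1 (by exact_mod_cast h1)
    rw [Function.iterate_one] at h2
    exact_mod_cast h2
  -- integrability of triple products
  have hTint : ∀ a b m : ℕ, a ≤ p + 1 → b ≤ p + 1 → m ≤ p →
      Integrable (fun x => iteratedDeriv a w x * iteratedDeriv b w x * iteratedDeriv m w x)
        (volume : Measure ℝ) :=
    fun a b m ha hb hm => triple_integrable hc hl ha hb (Nat.succ_le_succ hm)
  -- Leibniz
  have hLeib : ∀ j ≤ p, ∀ x : ℝ, iteratedDeriv j (fun y => w y * deriv w y) x
      = ∑ i ∈ Finset.range (j + 1), (j.choose i : ℝ) *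
          (iteratedDeriv i w x * iteratedDeriv (j - i + 1) w x) := by
    intro j hj x
    have hfj : ContDiff ℝ (j : ℕ∞) w := hc.of_le (by exact_mod_cast (by omega : j ≤ p + 1))
    have hgj : ContDiff ℝ (j : ℕ∞) (deriv w) := hder.of_le (by exact_mod_cast hj)
    rw [iteratedDeriv_mul_eq hfj hgj]
    refine Finset.sum_congr rfl fun i _ => ?_
    rw [← iteratedDeriv_succ']
  -- splitting each inner product integral
  have hSplit : ∀ j, j ≤ p →
      (∫ x : ℝ, iteratedDeriv j w x * iteratedDeriv j (fun y => w y * deriv w y) x)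
      = ∑ i ∈ Finset.range (j + 1), (j.choose i : ℝ) *
          ∫ x : ℝ, iteratedDeriv j w x *
            (iteratedDeriv i w x * iteratedDeriv (j - i + 1) w x) := by
    intro j hj
    have h1 : (fun x : ℝ => iteratedDeriv j w x * iteratedDeriv j (fun y => w y * deriv w y) x)
        = fun x => ∑ i ∈ Finset.range (j + 1), (j.choose i : ℝ) *
            (iteratedDeriv j w x * (iteratedDeriv i w x * iteratedDeriv (j - i + 1) w x)) := by
      funext x
      rw [hLeib j hj x, Finset.mul_sum]
      exact Finset.sum_congr rfl fun i _ => by ring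
    rw [h1, integral_finset_sum _ (fun i hi => ?_)]
    · exact Finset.sum_congr rfl fun i _ => integral_const_mul _ _
    · rw [Finset.mem_range, Nat.lt_succ_iff] at hi
      rw [show (fun x => (j.choose i : ℝ) *
            (iteratedDeriv j w x * (iteratedDeriv i w x * iteratedDeriv (j - i + 1) w x)))
          = (fun x => (j.choose i : ℝ) *
            (iteratedDeriv j w x * iteratedDeriv (j - i + 1) w x * iteratedDeriv i w x))
          from funext fun x => by ring]
      exact (hTint j (j - i + 1) i (by omega) (by omega) (by omega)).const_mul _
  -- the per-term bound
  have hTerm : ∀ j, j ≤ p → ∀ i, i ≤ j →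
      |∫ x : ℝ, iteratedDeriv j w x *
          (iteratedDeriv i w x * iteratedDeriv (j - i + 1) w x)| ≤ α * N ^ 2 := by
    intro j hj i hi
    by_cases hspec : j = p ∧ i = 0
    · -- integration by parts case
      obtain ⟨rfl, rfl⟩ := hspec
      -- derivative facts
      have hdw : ∀ x : ℝ, HasDerivAt w (iteratedDeriv 1 w x) x := by
        intro x
        have hdiff : Differentiable ℝ w :=
          hc.differentiable (by simp)
        have h := (hdiff x).hasDerivAt
        rwa [← iteratedDeriv_one] at h
      have hdp : ∀ x : ℝ, HasDerivAt (iteratedDeriv p w) (iteratedDeriv (p + 1) w x) x := by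
        intro x
        rw [iteratedDeriv_succ]
        exact ((hc.differentiable_iteratedDeriv p
          (Nat.cast_lt.mpr (Nat.lt_succ_self p))) x).hasDerivAt
      have hint1 : Integrable (fun x : ℝ => iteratedDeriv 1 w x *
          (iteratedDeriv p w x * iteratedDeriv p w x)) volume := by
        have h := hTint p p 1 (by omega) (by omega) (by omega)
        rw [show (fun x : ℝ => iteratedDeriv 1 w x *
            (iteratedDeriv p w x * iteratedDeriv p w x))
          = (fun x => iteratedDeriv p w x * iteratedDeriv p w x * iteratedDeriv 1 w x)
          from funext fun x => by ring]
        exact h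
      have hint2 : Integrable (fun x : ℝ => w x *
          (iteratedDeriv p w x * iteratedDeriv (p + 1) w x)) volume := by
        have h := hTint p (p + 1) 0 (by omega) (by omega) (by omega)
        rw [iteratedDeriv_zero] at h
        rw [show (fun x : ℝ => w x * (iteratedDeriv p w x * iteratedDeriv (p + 1) w x))
          = (fun x => iteratedDeriv p w x * iteratedDeriv (p + 1) w x * w x)
          from funext fun x => by ring]
        exact h
      have hintG : Integrable (fun x : ℝ => w x * (iteratedDeriv p w x) ^ 2) volume := by
        have h := hTint p p 0 (by omega) (by omega) (by omega)
        rw [iteratedDeriv_zero] at h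
        rw [show (fun x : ℝ => w x * (iteratedDeriv p w x) ^ 2)
          = (fun x => iteratedDeriv p w x * iteratedDeriv p w x * w x)
          from funext fun x => by ring]
        exact h
      have hG' : ∀ x : ℝ, HasDerivAt (fun y => w y * (iteratedDeriv p w y) ^ 2)
          (iteratedDeriv 1 w x * (iteratedDeriv p w x * iteratedDeriv p w x)
            + 2 * (w x * (iteratedDeriv p w x * iteratedDeriv (p + 1) w x))) x := by
        intro x
        have h := (hdw x).fun_mul ((hdp x).fun_pow 2)
        refine h.congr_deriv ?_
        norm_num only [pow_one]
        ring
      have hzero : (∫ x : ℝ, (iteratedDeriv 1 w x * (iteratedDeriv p w x * iteratedDeriv p w x)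
            + 2 * (w x * (iteratedDeriv p w x * iteratedDeriv (p + 1) w x)))) = 0 :=
        integral_deriv_eq_zero' hG' hintG (hint1.add (hint2.const_mul 2))
      have hsum : (∫ x : ℝ, iteratedDeriv 1 w x * (iteratedDeriv p w x * iteratedDeriv p w x))
          + 2 * (∫ x : ℝ, w x * (iteratedDeriv p w x * iteratedDeriv (p + 1) w x)) = 0 := by
        have e := integral_add hint1 (hint2.const_mul 2)
        rw [← integral_const_mul, ← e]
        exact hzero
      have hBval : (∫ x : ℝ, w x * (iteratedDeriv p w x * iteratedDeriv (p + 1) w x))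
          = -(1/2) * ∫ x : ℝ, iteratedDeriv 1 w x *
              (iteratedDeriv p w x * iteratedDeriv p w x) := by linarith
      have hAbound : |∫ x : ℝ, iteratedDeriv 1 w x *
          (iteratedDeriv p w x * iteratedDeriv p w x)| ≤ α * (N * N) := by
        have hb := triple_bound (N := p + 1) (a := p) (b := p) (m := 1) hc hl
          (by omega) (by omega) (by omega)
        rw [show (fun x : ℝ => iteratedDeriv 1 w x *
              (iteratedDeriv p w x * iteratedDeriv p w x))
            = (fun x => iteratedDeriv p w x * iteratedDeriv p w x * iteratedDeriv 1 w x)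
            from funext fun x => by ring]
        calc |∫ x : ℝ, iteratedDeriv p w x * iteratedDeriv p w x * iteratedDeriv 1 w x|
            ≤ sobolevNorm (1 + 1) w *
              (Real.sqrt (∫ x : ℝ, (iteratedDeriv p w x) ^ 2) *
               Real.sqrt (∫ x : ℝ, (iteratedDeriv p w x) ^ 2)) := hb
          _ ≤ α * (N * N) := by
              refine mul_le_mul (hαle 1 (by omega)) ?_ (by positivity) hα.le
              exact mul_le_mul (hNle p le_rfl) (hNle p le_rfl) (hsqrt0 _) hN0
      rw [show (fun x : ℝ => iteratedDeriv p w x *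
            (iteratedDeriv 0 w x * iteratedDeriv (p - 0 + 1) w x))
          = (fun x => w x * (iteratedDeriv p w x * iteratedDeriv (p + 1) w x)) from by
            funext x
            rw [iteratedDeriv_zero, Nat.sub_zero]
            ring]
      rw [hBval, abs_mul]
      have habs : |(-(1/2) : ℝ)| = 1/2 := by norm_num
      rw [habs]
      have h0 : 0 ≤ |∫ x : ℝ, iteratedDeriv 1 w x *
          (iteratedDeriv p w x * iteratedDeriv p w x)| := abs_nonneg _
      nlinarith [hAbound, hαN]
    · have hcase : i ≠ 0 ∨ j ≠ p := by tauto
      set k := j - i + 1 with hkdef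
      have hik : i + k = j + 1 := by omega
      have hkp : k ≤ p := by omega
      by_cases hiq : i + 1 ≤ q
      · -- sup-norm factor is ∂^i w
        have hb := triple_bound (N := p + 1) (a := j) (b := k) (m := i) hc hl
          (by omega) (by omega) (by omega)
        rw [show (fun x : ℝ => iteratedDeriv j w x *
              (iteratedDeriv i w x * iteratedDeriv k w x))
            = (fun x => iteratedDeriv j w x * iteratedDeriv k w x * iteratedDeriv i w x)
            from funext fun x => by ring]
        calc |∫ x : ℝ, iteratedDeriv j w x * iteratedDeriv k w x * iteratedDeriv i w x|
            ≤ sobolevNorm (i + 1) w *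
              (Real.sqrt (∫ x : ℝ, (iteratedDeriv j w x) ^ 2) *
               Real.sqrt (∫ x : ℝ, (iteratedDeriv k w x) ^ 2)) := hb
          _ ≤ α * (N * N) := by
              refine mul_le_mul (hαle i hiq) ?_ (by positivity) hα.le
              exact mul_le_mul (hNle j hj) (hNle k hkp) (hsqrt0 _) hN0
          _ = α * N ^ 2 := by ring
      · by_cases hkq : k + 1 ≤ q
        · -- sup-norm factor is ∂^k w
          have hb := triple_bound (N := p + 1) (a := j) (b := i) (m := k) hc hl
            (by omega) (by omega) (by omega)
          rw [show (fun x : ℝ => iteratedDeriv j w x *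
                (iteratedDeriv i w x * iteratedDeriv k w x))
              = (fun x => iteratedDeriv j w x * iteratedDeriv i w x * iteratedDeriv k w x)
              from funext fun x => by ring]
          calc |∫ x : ℝ, iteratedDeriv j w x * iteratedDeriv i w x * iteratedDeriv k w x|
              ≤ sobolevNorm (k + 1) w *
                (Real.sqrt (∫ x : ℝ, (iteratedDeriv j w x) ^ 2) *
                 Real.sqrt (∫ x : ℝ, (iteratedDeriv i w x) ^ 2)) := hb
            _ ≤ α * (N * N) := by
                refine mul_le_mul (hαle k hkq) ?_ (by positivity) hα.le
                exact mul_le_mul (hNle j hj) (hNle i (by omega)) (hsqrt0 _) hN0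
            _ = α * N ^ 2 := by ring
        · -- both i and k are at least q
          have hiq' : q ≤ i := by omega
          have hkq' : q ≤ k := by omega
          have hjp1 : j + 1 ≤ p + 1 := by omega
          rcases le_or_gt i k with hikle | hikle
          · -- L² factor with small index is ∂^i w, sup factor ∂^k w
            have hiqle : i ≤ q := by omega
            have hkp1 : k + 1 ≤ p := by omega
            have hb := triple_bound (N := p + 1) (a := j) (b := i) (m := k) hc hl
              (by omega) (by omega) (by omega)
            rw [show (fun x : ℝ => iteratedDeriv j w x *
                  (iteratedDeriv i w x * iteratedDeriv k w x))
                = (fun x => iteratedDeriv j w x * iteratedDeriv i w x * iteratedDeriv k w x)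
                from funext fun x => by ring]
            calc |∫ x : ℝ, iteratedDeriv j w x * iteratedDeriv i w x * iteratedDeriv k w x|
                ≤ sobolevNorm (k + 1) w *
                  (Real.sqrt (∫ x : ℝ, (iteratedDeriv j w x) ^ 2) *
                   Real.sqrt (∫ x : ℝ, (iteratedDeriv i w x) ^ 2)) := hb
              _ ≤ N * (N * α) := by
                  refine mul_le_mul (hNSle k hkp1) ?_ (by positivity) hN0
                  exact mul_le_mul (hNle j hj) (hQle i hiqle) (hsqrt0 _) hN0
              _ = α * N ^ 2 := by ring
          · have hkqle : k ≤ q := by omega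
            have hip1 : i + 1 ≤ p := by omega
            have hb := triple_bound (N := p + 1) (a := j) (b := k) (m := i) hc hl
              (by omega) (by omega) (by omega)
            rw [show (fun x : ℝ => iteratedDeriv j w x *
                  (iteratedDeriv i w x * iteratedDeriv k w x))
                = (fun x => iteratedDeriv j w x * iteratedDeriv k w x * iteratedDeriv i w x)
                from funext fun x => by ring]
            calc |∫ x : ℝ, iteratedDeriv j w x * iteratedDeriv k w x * iteratedDeriv i w x|
                ≤ sobolevNorm (i + 1) w *
                  (Real.sqrt (∫ x : ℝ, (iteratedDeriv j w x) ^ 2) *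
                   Real.sqrt (∫ x : ℝ, (iteratedDeriv k w x) ^ 2)) := hb
              _ ≤ N * (N * α) := by
                  refine mul_le_mul (hNSle i hip1) ?_ (by positivity) hN0
                  exact mul_le_mul (hNle j hj) (hQle k hkqle) (hsqrt0 _) hN0
              _ = α * N ^ 2 := by ring
  -- final assembly
  calc |∑ j ∈ Finset.range (p + 1), ∫ x : ℝ,
        iteratedDeriv j w x * iteratedDeriv j (fun y => w y * deriv w y) x|
      ≤ ∑ j ∈ Finset.range (p + 1), |∫ x : ℝ,
        iteratedDeriv j w x * iteratedDeriv j (fun y => w y * deriv w y) x| :=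
        Finset.abs_sum_le_sum_abs _ _
    _ ≤ ∑ j ∈ Finset.range (p + 1), ∑ i ∈ Finset.range (j + 1), (j.choose i : ℝ) * (α * N ^ 2) := by
        refine Finset.sum_le_sum fun j hj => ?_
        rw [Finset.mem_range, Nat.lt_succ_iff] at hj
        rw [hSplit j hj]
        refine (Finset.abs_sum_le_sum_abs _ _).trans ?_
        refine Finset.sum_le_sum fun i hi => ?_
        rw [Finset.mem_range, Nat.lt_succ_iff] at hi
        rw [abs_mul, Nat.abs_cast]
        exact mul_le_mul_of_nonneg_left (hTerm j hj i hi) (Nat.cast_nonneg _)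
    _ = (∑ j ∈ Finset.range (p + 1), ∑ i ∈ Finset.range (j + 1), (j.choose i : ℝ))
          * α * N ^ 2 := by
        rw [Finset.sum_mul, Finset.sum_mul]
        refine Finset.sum_congr rfl fun j _ => ?_
        rw [Finset.sum_mul, Finset.sum_mul]
        exact Finset.sum_congr rfl fun i _ => by ring
end

section
/- Let r ≥ 1 and ℓ ≥ 2 be integers, p = r+2ℓ−1, q = r+ℓ−1. There is a constant C such that for all integers j, k with 0 ≤ k ≤ j ≤ p−1 and all w ∈ H^p, |∫_ℝ ∂_x^j w · ∂_x^{k+1} w · ∂_x^{j−k} w dx| ≤ C ‖w‖²_{H^p} ‖w‖_{H^q}. -/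
open MeasureTheory Set

/-- Cauchy–Schwarz for real integrals. -/
lemma cs_integral (u v : ℝ → ℝ) (hu : MemLp u 2 volume) (hv : MemLp v 2 volume) :
    ∫ x : ℝ, |u x * v x| ≤ Real.sqrt (∫ x : ℝ, u x ^ 2) * Real.sqrt (∫ x : ℝ, v x ^ 2) := by
  have hpq : (2:ℝ).HolderConjugate 2 := Real.HolderConjugate.two_two
  have hu' : MemLp u (ENNReal.ofReal 2) volume := by simpa using hu
  have hv' : MemLp v (ENNReal.ofReal 2) volume := by simpa using hv
  have h := integral_mul_norm_le_Lp_mul_Lq (μ := volume) hpq hu' hv'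
  have e1 : ∀ f : ℝ → ℝ, (∫ x : ℝ, ‖f x‖ ^ (2:ℝ)) = ∫ x : ℝ, f x ^ 2 := by
    intro f
    refine integral_congr_ae (Filter.Eventually.of_forall fun x => ?_)
    show ‖f x‖ ^ (2:ℝ) = f x ^ 2
    rw [show ((2:ℝ)) = ((2:ℕ):ℝ) by norm_num, Real.rpow_natCast]; exact sq_abs _
  rw [e1, e1] at h
  calc ∫ x : ℝ, |u x * v x| = ∫ x : ℝ, ‖u x‖ * ‖v x‖ := by
        simp [abs_mul, Real.norm_eq_abs]
    _ ≤ (∫ x : ℝ, u x ^ 2) ^ ((1:ℝ)/2) * (∫ x : ℝ, v x ^ 2) ^ ((1:ℝ)/2) := h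
    _ = _ := by rw [Real.sqrt_eq_rpow, Real.sqrt_eq_rpow]

/-- Agmon-type bound: `f(x)² ≤ ∫ f² + ∫ f'²`. -/
lemma agmon {f f' : ℝ → ℝ} (hf' : ∀ x, HasDerivAt f (f' x) x)
    (h2 : MemLp f 2 volume) (h2' : MemLp f' 2 volume) (x : ℝ) :
    f x ^ 2 ≤ (∫ y : ℝ, f y ^ 2) + ∫ y : ℝ, f' y ^ 2 := by
  have hg2 : Integrable (fun y : ℝ => f y ^ 2) volume := h2.integrable_sq
  have hg2' : Integrable (fun y : ℝ => f' y ^ 2) volume := h2'.integrable_sq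
  have hG : Integrable (fun y : ℝ => f y ^ 2 + f' y ^ 2) volume := hg2.add hg2'
  have hfc : Continuous f := by
    have : Differentiable ℝ f := fun y => (hf' y).differentiableAt
    exact this.continuous
  have hfm : AEStronglyMeasurable (fun y : ℝ => 2 * f y * f' y) volume :=
    (hfc.aestronglyMeasurable.const_mul 2).mul h2'.1
  have hbd : ∀ y : ℝ, |2 * f y * f' y| ≤ f y ^ 2 + f' y ^ 2 := by
    intro y
    have h1 := sq_nonneg (f y - f' y)
    have h2 := sq_nonneg (f y + f' y)
    rw [abs_le]; constructor <;> nlinarith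
  have hint : Integrable (fun y : ℝ => 2 * f y * f' y) volume := by
    refine Integrable.mono' hG hfm (Filter.Eventually.of_forall fun y => ?_)
    simp only [Real.norm_eq_abs]; exact hbd y
  have hderiv : ∀ y : ℝ, HasDerivAt (fun y => f y ^ 2) (2 * f y * f' y) y := by
    intro y
    have := (hf' y).fun_pow 2
    simpa [mul_comm, mul_assoc, mul_left_comm] using this
  have hftc : ∀ y : ℝ, f x ^ 2 ≤ f y ^ 2 + ∫ t : ℝ, |2 * f t * f' t| := by
    intro y
    have h1 : (∫ t in y..x, 2 * f t * f' t) = f x ^ 2 - f y ^ 2 :=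
      intervalIntegral.integral_eq_sub_of_hasDerivAt (fun t _ => hderiv t)
        hint.intervalIntegrable
    have h2'' : ‖∫ t in y..x, 2 * f t * f' t‖ ≤ ∫ t : ℝ, ‖2 * f t * f' t‖ := by
      refine intervalIntegral.norm_integral_le_integral_norm_uIoc.trans ?_
      exact setIntegral_le_integral hint.norm
        (Filter.Eventually.of_forall fun t => norm_nonneg _)
    simp only [Real.norm_eq_abs] at h2''
    have h3 := (abs_le.mp h2'').2
    nlinarith [le_abs_self (∫ t in y..x, 2 * f t * f' t)]
  have habs : (∫ t : ℝ, |2 * f t * f' t|) ≤ (∫ y : ℝ, f y ^ 2) + ∫ y : ℝ, f' y ^ 2 := by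
    rw [← integral_add hg2 hg2']
    exact integral_mono hint.abs hG hbd
  have hsmall : ∀ ε : ℝ, 0 < ε → ∃ y : ℝ, f y ^ 2 < ε := by
    intro ε hε
    by_contra h
    push_neg at h
    have hset : {y : ℝ | ε ≤ f y ^ 2} = univ := eq_univ_of_forall fun y => h y
    have := hg2.measure_ge_lt_top hε
    rw [hset, Real.volume_univ] at this
    exact (lt_irrefl _ this).elim
  refine le_of_forall_pos_le_add fun ε hε => ?_
  obtain ⟨y, hy⟩ := hsmall ε hε
  have := hftc y
  linarith [habs]

/-- The key trilinear estimate: if `a ≤ q`, `b + 1 ≤ p`, `c ≤ p` (with `q ≤ p`) then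
`|∫ ∂^a w ∂^b w ∂^c w| ≤ ‖w‖_{H^p}² ‖w‖_{H^q}`. -/
lemma trilinear_key (p q : ℕ) (hqp : q ≤ p) (w : ℝ → ℝ) (hw : MemH p w)
    (a b c : ℕ) (ha : a ≤ q) (hb : b + 1 ≤ p) (hc : c ≤ p) :
    |∫ x : ℝ, iteratedDeriv a w x * iteratedDeriv b w x * iteratedDeriv c w x|
      ≤ sobolevNorm p w ^ 2 * sobolevNorm q w := by
  obtain ⟨hsm, hL2⟩ := hw
  set u := iteratedDeriv a w with hu
  set v := iteratedDeriv b w with hv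
  set z := iteratedDeriv c w with hz
  have hu2 : MemLp u 2 volume := hL2 a (ha.trans hqp)
  have hv2 : MemLp v 2 volume := hL2 b (Nat.le_of_succ_le hb)
  have hv'2 : MemLp (iteratedDeriv (b+1) w) 2 volume := hL2 (b+1) hb
  have hz2 : MemLp z 2 volume := hL2 c hc
  have hterm : ∀ n : ℕ, 0 ≤ ∫ x : ℝ, (iteratedDeriv n w x) ^ 2 :=
    fun n => integral_nonneg fun x => sq_nonneg _
  have hsq : ∀ s : ℕ, sobolevNorm s w ^ 2
      = ∑ j ∈ Finset.range (s + 1), ∫ x : ℝ, (iteratedDeriv j w x) ^ 2 := by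
    intro s
    exact Real.sq_sqrt (Finset.sum_nonneg fun i _ => hterm i)
  have hM0 : 0 ≤ sobolevNorm p w := Real.sqrt_nonneg _
  have hq0 : 0 ≤ sobolevNorm q w := Real.sqrt_nonneg _
  have hdiffv : Differentiable ℝ v := by
    refine hsm.differentiable_iteratedDeriv b ?_
    exact_mod_cast Nat.lt_of_succ_le hb
  have hv' : ∀ x, HasDerivAt v (iteratedDeriv (b+1) w x) x := by
    intro x
    rw [iteratedDeriv_succ]
    exact (hdiffv x).hasDerivAt
  have hvb : ∀ x, v x ^ 2 ≤ sobolevNorm p w ^ 2 := by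
    intro x
    refine (agmon hv' hv2 hv'2 x).trans ?_
    rw [hsq p]
    have he : (∫ y : ℝ, v y ^ 2) + (∫ y : ℝ, iteratedDeriv (b+1) w y ^ 2)
        = ∑ j ∈ ({b, b+1} : Finset ℕ), ∫ x : ℝ, (iteratedDeriv j w x) ^ 2 := by
      rw [Finset.sum_pair (Nat.ne_of_lt (lt_add_one b))]
    rw [he]
    refine Finset.sum_le_sum_of_subset_of_nonneg ?_ (fun i _ _ => hterm i)
    intro i hi
    simp only [Finset.mem_insert, Finset.mem_singleton] at hi
    simp only [Finset.mem_range]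
    omega
  have hvM : ∀ x, |v x| ≤ sobolevNorm p w := by
    intro x
    have h := Real.sqrt_le_sqrt (hvb x)
    rwa [Real.sqrt_sq_eq_abs, Real.sqrt_sq hM0] at h
  have huz : Integrable (fun x => u x * z x) volume := by
    refine Integrable.mono' (hu2.integrable_sq.add hz2.integrable_sq)
      (hu2.1.mul hz2.1) (Filter.Eventually.of_forall fun x => ?_)
    simp only [Pi.add_apply, Real.norm_eq_abs, abs_mul]
    nlinarith [sq_nonneg (|u x| - |z x|), sq_abs (u x), sq_abs (z x),
      abs_nonneg (u x), abs_nonneg (z x)]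
  have h1 : Real.sqrt (∫ x : ℝ, u x ^ 2) ≤ sobolevNorm q w := by
    apply Real.sqrt_le_sqrt
    exact Finset.single_le_sum (fun i _ => hterm i) (Finset.mem_range.mpr (by omega))
  have h2 : Real.sqrt (∫ x : ℝ, z x ^ 2) ≤ sobolevNorm p w := by
    apply Real.sqrt_le_sqrt
    exact Finset.single_le_sum (fun i _ => hterm i) (Finset.mem_range.mpr (by omega))
  calc |∫ x : ℝ, u x * v x * z x| ≤ ∫ x : ℝ, |u x * v x * z x| := by
        have h := norm_integral_le_integral_norm (μ := volume)
          (fun x : ℝ => u x * v x * z x)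
        simp only [Real.norm_eq_abs] at h
        exact h
    _ ≤ ∫ x : ℝ, sobolevNorm p w * |u x * z x| := by
        refine integral_mono_of_nonneg (Filter.Eventually.of_forall fun x => abs_nonneg _)
          (huz.abs.const_mul _) (Filter.Eventually.of_forall fun x => ?_)
        calc |u x * v x * z x| = |v x| * |u x * z x| := by
              rw [abs_mul, abs_mul, abs_mul]; ring
          _ ≤ sobolevNorm p w * |u x * z x| :=
              mul_le_mul_of_nonneg_right (hvM x) (abs_nonneg _)
    _ = sobolevNorm p w * ∫ x : ℝ, |u x * z x| := integral_const_mul _ _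
    _ ≤ sobolevNorm p w * (Real.sqrt (∫ x : ℝ, u x ^ 2) * Real.sqrt (∫ x : ℝ, z x ^ 2)) :=
        mul_le_mul_of_nonneg_left (cs_integral u z hu2 hz2) hM0
    _ ≤ sobolevNorm p w * (sobolevNorm q w * sobolevNorm p w) := by
        refine mul_le_mul_of_nonneg_left ?_ hM0
        exact mul_le_mul h1 h2 (Real.sqrt_nonneg _) hq0
    _ = sobolevNorm p w ^ 2 * sobolevNorm q w := by ring

/-- **Trilinear term estimate** (case `j < p` in the proof of Lemma 3.1).  With
`p = r+2ℓ-1`, `q = r+ℓ-1`:  there is a constant `C` such that for all `0 ≤ k ≤ j ≤ p-1`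
and all `w ∈ H^p`, `|∫ ∂^j w ∂^{k+1} w ∂^{j-k} w dx| ≤ C ‖w‖_{H^p}² ‖w‖_{H^q}`. -/
theorem trilinear_derivative_bound (r ℓ : ℕ) (hr : 1 ≤ r) (hℓ : 2 ≤ ℓ) :
    ∃ C : ℝ, ∀ j k : ℕ, k ≤ j → j < r + 2 * ℓ - 1 → ∀ w : ℝ → ℝ,
      MemH (r + 2 * ℓ - 1) w →
      |∫ x : ℝ, iteratedDeriv j w x * iteratedDeriv (k + 1) w x *
          iteratedDeriv (j - k) w x|
        ≤ C * (sobolevNorm (r + 2 * ℓ - 1) w) ^ 2 * sobolevNorm (r + ℓ - 1) w := by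
  refine ⟨1, fun j k hkj hjp w hw => ?_⟩
  have hqp : r + ℓ - 1 ≤ r + 2 * ℓ - 1 := by omega
  rw [one_mul]
  rcases le_or_gt (k + 1) (j - k) with hcase | hcase
  · rw [show (fun x : ℝ => iteratedDeriv j w x * iteratedDeriv (k + 1) w x *
        iteratedDeriv (j - k) w x)
        = fun x : ℝ => iteratedDeriv (k + 1) w x * iteratedDeriv (j - k) w x *
          iteratedDeriv j w x from funext fun x => by ring]
    exact trilinear_key _ _ hqp w hw (k + 1) (j - k) j (by omega) (by omega) (by omega)
  · rw [show (fun x : ℝ => iteratedDeriv j w x * iteratedDeriv (k + 1) w x *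
        iteratedDeriv (j - k) w x)
        = fun x : ℝ => iteratedDeriv (j - k) w x * iteratedDeriv j w x *
          iteratedDeriv (k + 1) w x from funext fun x => by ring]
    exact trilinear_key _ _ hqp w hw (j - k) j (k + 1) (by omega) (by omega) (by omega)
end

section
/- Let r ≥ 1 and ℓ ≥ 2 be integers, p = r+2ℓ−1, q = r+ℓ−1, and let P be a polynomial of degree ℓ. Define the Lie commutator [A,B](v) = P(∂_x)(v v_x) − (P(∂_x)v) v_x − v P(∂_x)(v_x). Then there is a constant C (depending on P, r, ℓ) such that for all v ∈ H^p, ‖[A,B](v)‖_{H^q} ≤ C ‖v‖²_{H^p}. -/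
open MeasureTheory Set

/-- The constant-coefficient differential operator `P(∂_x)` for a polynomial `P`. -/
noncomputable def applyP (P : Polynomial ℝ) (f : ℝ → ℝ) : ℝ → ℝ :=
  fun x => ∑ k ∈ Finset.range (P.natDegree + 1), P.coeff k * iteratedDeriv k f x

section Helpers

private lemma hasDerivAt_iter {v : ℝ → ℝ} {p a : ℕ} (hv : ContDiff ℝ (p : ℕ∞) v)
    (ha : a < p) (x : ℝ) :
    HasDerivAt (iteratedDeriv a v) (iteratedDeriv (a + 1) v x) x := by
  rw [iteratedDeriv_succ]
  exact ((hv.differentiable_iteratedDeriv a (by exact_mod_cast ha)) x).hasDerivAt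

private lemma contDiff_deriv {v : ℝ → ℝ} {k : ℕ} (hv : ContDiff ℝ ((k + 1 : ℕ) : ℕ∞) v) :
    ContDiff ℝ (k : ℕ∞) (deriv v) := by
  have hv' : ContDiff ℝ ((k : WithTop ℕ∞) + 1) v := by exact_mod_cast hv
  exact_mod_cast (contDiff_succ_iff_deriv.1 hv').2.2

private lemma contDiff_one_iter {v : ℝ → ℝ} {p m : ℕ} (hv : ContDiff ℝ (p : ℕ∞) v)
    (hm : m + 1 ≤ p) : ContDiff ℝ 1 (iteratedDeriv m v) := by
  rw [contDiff_one_iff_deriv]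
  constructor
  · exact hv.differentiable_iteratedDeriv m (by exact_mod_cast hm)
  · rw [← iteratedDeriv_succ]
    exact hv.continuous_iteratedDeriv (m + 1) (by exact_mod_cast hm)

private lemma leibniz : ∀ (n : ℕ) (f g : ℝ → ℝ), ContDiff ℝ (n : ℕ∞) f →
    ContDiff ℝ (n : ℕ∞) g → ∀ x : ℝ,
    iteratedDeriv n (fun y => f y * g y) x
      = ∑ i ∈ Finset.range (n + 1), (n.choose i : ℝ) *
          (iteratedDeriv i f x * iteratedDeriv (n - i) g x) := by
  intro n
  induction n with
  | zero => intro f g _ _ x; simp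
  | succ n ih =>
    intro f g hf hg x
    have hfn : ContDiff ℝ (n : ℕ∞) f := hf.of_le (by exact_mod_cast Nat.le_succ n)
    have hgn : ContDiff ℝ (n : ℕ∞) g := hg.of_le (by exact_mod_cast Nat.le_succ n)
    have hrw : iteratedDeriv n (fun y => f y * g y) = fun x =>
        ∑ i ∈ Finset.range (n + 1), (n.choose i : ℝ) *
          (iteratedDeriv i f x * iteratedDeriv (n - i) g x) :=
      funext (ih f g hfn hgn)
    rw [iteratedDeriv_succ, hrw]
    have hd : HasDerivAt (fun x => ∑ i ∈ Finset.range (n + 1), (n.choose i : ℝ) *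
          (iteratedDeriv i f x * iteratedDeriv (n - i) g x))
        (∑ i ∈ Finset.range (n + 1), (n.choose i : ℝ) *
          (iteratedDeriv (i + 1) f x * iteratedDeriv (n - i) g x
           + iteratedDeriv i f x * iteratedDeriv (n - i + 1) g x)) x := by
      apply HasDerivAt.fun_sum
      intro i hi
      rw [Finset.mem_range] at hi
      have h1 := hasDerivAt_iter (p := n + 1) (a := i) hf (by omega) x
      have h2 := hasDerivAt_iter (p := n + 1) (a := n - i) hg (by omega) x
      simpa [mul_add] using ((h1.mul h2).const_mul ((n.choose i : ℝ)))
    rw [hd.deriv]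
    have key : ∀ i ∈ Finset.range (n + 1),
        (n.choose i : ℝ) * (iteratedDeriv (i + 1) f x * iteratedDeriv (n - i) g x
           + iteratedDeriv i f x * iteratedDeriv (n - i + 1) g x)
        = (n.choose i : ℝ) * (iteratedDeriv (i + 1) f x * iteratedDeriv (n + 1 - (i + 1)) g x)
          + (n.choose i : ℝ) * (iteratedDeriv i f x * iteratedDeriv (n + 1 - i) g x) := by
      intro i hi
      rw [Finset.mem_range] at hi
      have e1 : n + 1 - (i + 1) = n - i := by omega
      have e2 : n + 1 - i = n - i + 1 := by omega
      rw [e1, e2]; ring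
    rw [Finset.sum_congr rfl key, Finset.sum_add_distrib]
    set A : ℕ → ℝ := fun i => iteratedDeriv i f x * iteratedDeriv (n + 1 - i) g x with hA
    have rhs : ∑ i ∈ Finset.range (n + 2), ((n + 1).choose i : ℝ) * A i
        = ∑ i ∈ Finset.range (n + 1), ((n + 1).choose (i + 1) : ℝ) * A (i + 1) + A 0 := by
      rw [Finset.sum_range_succ']; simp
    have lhs2 : ∑ i ∈ Finset.range (n + 1), (n.choose i : ℝ) * A i
        = ∑ i ∈ Finset.range (n + 1), (n.choose (i + 1) : ℝ) * A (i + 1) + A 0 := by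
      rw [Finset.sum_range_succ']
      congr 1
      · rw [Finset.sum_range_succ]
        simp [Nat.choose_succ_self]
      · simp
    rw [rhs, lhs2, ← add_assoc, ← Finset.sum_add_distrib]
    congr 1
    apply Finset.sum_congr rfl
    intro i hi
    simp only [hA]
    have : ((n + 1).choose (i + 1) : ℝ) = (n.choose i : ℝ) + (n.choose (i + 1) : ℝ) := by
      rw [Nat.choose_succ_succ]; push_cast; ring
    rw [this]; ring

private lemma key_identity {v : ℝ → ℝ} {N : ℕ} (hv : ContDiff ℝ (N : ℕ∞) v)
    (k : ℕ) (hk : k + 1 ≤ N) (x : ℝ) :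
    ∑ i ∈ Finset.range (k + 1), (if 1 ≤ i ∧ i < k then
        (k.choose i : ℝ) * (iteratedDeriv i v x * iteratedDeriv (k + 1 - i) v x) else 0)
    = iteratedDeriv k (fun y => v y * deriv v y) x
      - iteratedDeriv k v x * deriv v x - v x * iteratedDeriv k (deriv v) x
      + (if k = 0 then v x * deriv v x else 0) := by
  have hvk : ContDiff ℝ (k : ℕ∞) v := hv.of_le (by exact_mod_cast Nat.le_of_succ_le hk)
  have hvk1 : ContDiff ℝ ((k + 1 : ℕ) : ℕ∞) v := hv.of_le (by exact_mod_cast hk)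
  have hg : ContDiff ℝ (k : ℕ∞) (deriv v) := contDiff_deriv hvk1
  have hL : iteratedDeriv k (fun y => v y * deriv v y) x
      = ∑ i ∈ Finset.range (k + 1), (k.choose i : ℝ) *
          (iteratedDeriv i v x * iteratedDeriv (k + 1 - i) v x) := by
    rw [leibniz k v (deriv v) hvk hg x]
    apply Finset.sum_congr rfl
    intro i hi
    rw [Finset.mem_range] at hi
    have : k + 1 - i = (k - i) + 1 := by omega
    rw [this, iteratedDeriv_succ']
  have hkd : iteratedDeriv k (deriv v) x = iteratedDeriv (k + 1) v x := by
    rw [iteratedDeriv_succ']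
  have hdv : deriv v x = iteratedDeriv 1 v x := by simp
  rw [hL, hkd, hdv]
  rcases Nat.eq_zero_or_pos k with hk0 | hkpos
  · subst hk0; simp
  · have hne : k ≠ 0 := by omega
    have hsplit : ∀ i ∈ Finset.range (k + 1),
        (k.choose i : ℝ) * (iteratedDeriv i v x * iteratedDeriv (k + 1 - i) v x)
        = (if 1 ≤ i ∧ i < k then
            (k.choose i : ℝ) * (iteratedDeriv i v x * iteratedDeriv (k + 1 - i) v x) else 0)
          + (if i = 0 then v x * iteratedDeriv (k + 1) v x else 0)
          + (if i = k then iteratedDeriv k v x * iteratedDeriv 1 v x else 0) := by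
      intro i hi
      rw [Finset.mem_range] at hi
      rcases Nat.eq_zero_or_pos i with h0 | h1
      · subst h0
        simp [hne.symm, iteratedDeriv_zero]
      · rcases eq_or_lt_of_le (by omega : i + 1 ≤ k + 1) with he | hl
        · have : i = k := by omega
          subst this
          simp [show ¬ (1 ≤ i ∧ i < i) from by omega, hne]
        · have hik : i < k := by omega
          simp [show (1 ≤ i ∧ i < k) from ⟨h1, hik⟩, show i ≠ 0 from by omega,
            show i ≠ k from by omega]
    rw [Finset.sum_congr rfl hsplit, Finset.sum_add_distrib, Finset.sum_add_distrib,
      Finset.sum_ite_eq' (Finset.range (k + 1)) 0, Finset.sum_ite_eq' (Finset.range (k + 1)) k]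
    simp [hne, Finset.mem_range]

private lemma holder_L2 {f g : ℝ → ℝ} (h2 : MemLp f 2 volume) (h2' : MemLp g 2 volume) :
    ∫ y, |f y| * |g y| ≤ Real.sqrt (∫ y, f y ^ 2) * Real.sqrt (∫ y, g y ^ 2) := by
  have hpq : Real.HolderConjugate 2 2 := ⟨by norm_num, by norm_num, by norm_num⟩
  have h2a : MemLp f (ENNReal.ofReal 2) volume := by
    rw [ENNReal.ofReal_ofNat]; exact h2
  have h2b : MemLp g (ENNReal.ofReal 2) volume := by
    rw [ENNReal.ofReal_ofNat]; exact h2'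
  have := MeasureTheory.integral_mul_norm_le_Lp_mul_Lq hpq h2a h2b
  simp only [Real.norm_eq_abs] at this
  have habs : ∀ (h : ℝ → ℝ), (∫ y, |h y| ^ (2:ℝ)) = ∫ y, h y ^ 2 := by
    intro h
    congr 1
    funext y
    rw [show (2:ℝ) = ((2:ℕ):ℝ) by norm_num, Real.rpow_natCast, sq_abs]
  rw [habs f, habs g, ← Real.sqrt_eq_rpow, ← Real.sqrt_eq_rpow] at this
  exact this

private lemma integrable_abs_mul {f g : ℝ → ℝ} (hf : Continuous f) (hg : Continuous g)
    (h2 : MemLp f 2 volume) (h2' : MemLp g 2 volume) :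
    Integrable (fun y => |f y| * |g y|) volume := by
  apply Integrable.mono' (((h2.integrable_sq.add h2'.integrable_sq)).const_mul (1/2 : ℝ))
    (hf.abs.mul hg.abs).aestronglyMeasurable
  apply Filter.Eventually.of_forall
  intro y
  have h1 : ‖|f y| * |g y|‖ = |f y| * |g y| := by
    rw [Real.norm_eq_abs, abs_mul, abs_abs, abs_abs]
  rw [Pi.mul_apply, h1]
  simp only [Pi.add_apply]
  nlinarith [sq_nonneg (|f y| - |g y|), sq_abs (f y), sq_abs (g y)]

private lemma sq_le_of_L2 {f : ℝ → ℝ} (hf : ContDiff ℝ 1 f)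
    (h2 : MemLp f 2 volume) (h2' : MemLp (deriv f) 2 volume) (x : ℝ) :
    f x ^ 2 ≤ 2 * (Real.sqrt (∫ y, f y ^ 2) * Real.sqrt (∫ y, deriv f y ^ 2)) := by
  have hdiff : Differentiable ℝ f := hf.differentiable one_ne_zero
  have hcont : Continuous f := hf.continuous
  have hderc : Continuous (deriv f) := (contDiff_one_iff_deriv.1 hf).2
  set I : ℝ := ∫ y, |f y| * |deriv f y| with hI
  have hint : Integrable (fun y => |f y| * |deriv f y|) volume :=
    integrable_abs_mul hcont hderc h2 h2'
  have key : ∀ y : ℝ, f x ^ 2 ≤ f y ^ 2 + 2 * I := by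
    intro y
    have hftc : ∫ t in y..x, 2 * (f t * deriv f t)
        = f x ^ 2 - f y ^ 2 := by
      apply intervalIntegral.integral_eq_sub_of_hasDerivAt
      · intro t _
        have := ((hdiff t).hasDerivAt).fun_pow 2
        refine this.congr_deriv ?_
        ring
      · exact (continuous_const.mul (hcont.mul hderc)).intervalIntegrable y x
    have hb : f x ^ 2 - f y ^ 2 ≤ 2 * I := by
      rw [← hftc]
      calc ∫ t in y..x, 2 * (f t * deriv f t)
          ≤ |∫ t in y..x, 2 * (f t * deriv f t)| := le_abs_self _
        _ ≤ ∫ t in Set.uIoc y x, ‖2 * (f t * deriv f t)‖ := by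
            have hn := intervalIntegral.norm_integral_le_integral_norm_uIoc
              (f := fun t => 2 * (f t * deriv f t)) (a := y) (b := x) (μ := volume)
            rw [Real.norm_eq_abs] at hn
            exact hn
        _ = ∫ t in Set.uIoc y x, 2 * (|f t| * |deriv f t|) := by
            congr 1; funext t
            rw [Real.norm_eq_abs, abs_mul, abs_mul, abs_two]
        _ ≤ ∫ t, 2 * (|f t| * |deriv f t|) := by
            apply setIntegral_le_integral (hint.const_mul 2)
            apply Filter.Eventually.of_forall
            intro t
            positivity
        _ = 2 * I := by rw [hI, integral_const_mul]
    linarith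
  have hsmall : ∀ ε : ℝ, 0 < ε → ∃ y, f y ^ 2 ≤ ε := by
    intro ε hε
    by_contra hcon
    push_neg at hcon
    have hconst : Integrable (fun _ : ℝ => ε) volume := by
      apply Integrable.mono' h2.integrable_sq aestronglyMeasurable_const
      apply Filter.Eventually.of_forall
      intro y
      rw [Real.norm_eq_abs, abs_of_pos hε]
      exact le_of_lt (hcon y)
    rw [integrable_const_iff] at hconst
    rcases hconst with h | h
    · exact absurd h (ne_of_gt hε)
    · exact absurd h.measure_univ_lt_top (by simp [Real.volume_univ])
  have hfin : f x ^ 2 ≤ 2 * I := by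
    apply le_of_forall_pos_le_add
    intro ε hε
    obtain ⟨y, hy⟩ := hsmall ε hε
    have := key y
    linarith
  calc f x ^ 2 ≤ 2 * I := hfin
    _ ≤ 2 * (Real.sqrt (∫ y, f y ^ 2) * Real.sqrt (∫ y, deriv f y ^ 2)) := by
        have := holder_L2 h2 h2'
        linarith

private lemma toFin {α : Type*} (s : Finset α) :
    ∃ (n : ℕ) (σ : Fin n → α), (∀ i, σ i ∈ s) ∧
      ∀ g : α → ℝ, ∑ i, g (σ i) = ∑ t ∈ s, g t := by
  refine ⟨s.card, fun i => (s.equivFin.symm i : α), fun i => (s.equivFin.symm i).2, fun g => ?_⟩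
  rw [← Finset.sum_coe_sort s g]
  exact Fintype.sum_equiv s.equivFin.symm (fun i => g ((s.equivFin.symm i : α)))
    (fun a : s => g (a : α)) (fun i => rfl)

private lemma repr_lemma (r ℓ : ℕ) (hr : 1 ≤ r) (hℓ : 2 ≤ ℓ) (P : Polynomial ℝ)
    (hdeg : P.natDegree = ℓ) :
    ∀ j, j ≤ r + ℓ - 1 → ∃ (n : ℕ) (w : Fin n → ℝ) (A B : Fin n → ℕ),
      (∀ t, w t = 0 ∨ (A t ≤ ℓ + j ∧ B t ≤ ℓ + j ∧ A t + B t ≤ ℓ + 1 + j)) ∧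
      ∀ v : ℝ → ℝ, ContDiff ℝ ((r + 2 * ℓ - 1 : ℕ) : ℕ∞) v → ∀ x : ℝ,
        iteratedDeriv j (fun x => applyP P (fun y => v y * deriv v y) x
            - applyP P v x * deriv v x - v x * applyP P (deriv v) x) x
        = ∑ t, w t * (iteratedDeriv (A t) v x * iteratedDeriv (B t) v x) := by
  intro j
  induction j with
  | zero =>
    intro _
    obtain ⟨n, σ, hmem, hsum⟩ := toFin (Finset.range (ℓ + 1) ×ˢ Finset.range (ℓ + 2))
    set W : ℕ × ℕ → ℝ := fun t =>
      (if 1 ≤ t.2 ∧ t.2 < t.1 then P.coeff t.1 * (t.1.choose t.2 : ℝ) else 0)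
      + (if t = (0, 1) then -P.coeff 0 else 0) with hW
    refine ⟨n, fun i => W (σ i), fun i => (σ i).2, fun i => (σ i).1 + 1 - (σ i).2, ?_, ?_⟩
    · intro t
      dsimp only
      have hm := hmem t
      rw [Finset.mem_product, Finset.mem_range, Finset.mem_range] at hm
      by_cases h1 : 1 ≤ (σ t).2 ∧ (σ t).2 < (σ t).1
      · right
        refine ⟨by omega, by omega, by omega⟩
      · by_cases h2 : σ t = (0, 1)
        · right
          have e1 : (σ t).1 = 0 := by rw [h2]
          have e2 : (σ t).2 = 1 := by rw [h2]
          refine ⟨by omega, by omega, by omega⟩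
        · left
          rw [hW]
          simp [h1, h2]
    · intro v hv x
      simp only [iteratedDeriv_zero]
      refine Eq.trans ?_ (hsum (fun u => W u *
        (iteratedDeriv u.2 v x * iteratedDeriv (u.1 + 1 - u.2) v x))).symm
      -- goal : F x = ∑ t ∈ s, W t * X t
      have hsplit : ∑ t ∈ Finset.range (ℓ + 1) ×ˢ Finset.range (ℓ + 2), W t *
            (iteratedDeriv t.2 v x * iteratedDeriv (t.1 + 1 - t.2) v x)
          = (∑ t ∈ Finset.range (ℓ + 1) ×ˢ Finset.range (ℓ + 2),
              (if 1 ≤ t.2 ∧ t.2 < t.1 then P.coeff t.1 * (t.1.choose t.2 : ℝ) else 0) *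
                (iteratedDeriv t.2 v x * iteratedDeriv (t.1 + 1 - t.2) v x))
            + ∑ t ∈ Finset.range (ℓ + 1) ×ˢ Finset.range (ℓ + 2),
              (if t = (0, 1) then -P.coeff 0 else 0) *
                (iteratedDeriv t.2 v x * iteratedDeriv (t.1 + 1 - t.2) v x) := by
        rw [← Finset.sum_add_distrib]
        apply Finset.sum_congr rfl
        intro t _
        rw [hW]
        ring
      have h2 : ∑ t ∈ Finset.range (ℓ + 1) ×ˢ Finset.range (ℓ + 2),
            (if t = (0, 1) then -P.coeff 0 else 0) *
              (iteratedDeriv t.2 v x * iteratedDeriv (t.1 + 1 - t.2) v x)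
          = -P.coeff 0 * (iteratedDeriv 1 v x * iteratedDeriv 0 v x) := by
        simp only [ite_mul, zero_mul]
        rw [Finset.sum_ite_eq' (Finset.range (ℓ + 1) ×ˢ Finset.range (ℓ + 2)) ((0, 1) : ℕ × ℕ)]
        have : ((0, 1) : ℕ × ℕ) ∈ Finset.range (ℓ + 1) ×ˢ Finset.range (ℓ + 2) := by
          rw [Finset.mem_product, Finset.mem_range, Finset.mem_range]
          omega
        rw [if_pos this]
        rfl
      have h1 : ∑ t ∈ Finset.range (ℓ + 1) ×ˢ Finset.range (ℓ + 2),
            (if 1 ≤ t.2 ∧ t.2 < t.1 then P.coeff t.1 * (t.1.choose t.2 : ℝ) else 0) *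
              (iteratedDeriv t.2 v x * iteratedDeriv (t.1 + 1 - t.2) v x)
          = ∑ k ∈ Finset.range (ℓ + 1), P.coeff k *
              (iteratedDeriv k (fun y => v y * deriv v y) x
               - iteratedDeriv k v x * deriv v x - v x * iteratedDeriv k (deriv v) x
               + (if k = 0 then v x * deriv v x else 0)) := by
        rw [Finset.sum_product]
        apply Finset.sum_congr rfl
        intro k hk
        rw [Finset.mem_range] at hk
        rw [← key_identity hv k (by omega) x, Finset.mul_sum]
        have hsub : Finset.range (k + 1) ⊆ Finset.range (ℓ + 2) := by
          apply Finset.range_subset_range.2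
          omega
        rw [← Finset.sum_subset hsub (by
          intro i _ hnot
          rw [Finset.mem_range] at hnot
          have : ¬ (1 ≤ i ∧ i < k) := by omega
          rw [if_neg this, zero_mul])]
        apply Finset.sum_congr rfl
        intro i _
        split_ifs with hcond
        · ring
        · rw [zero_mul, mul_zero]
      have hF : applyP P (fun y => v y * deriv v y) x - applyP P v x * deriv v x
            - v x * applyP P (deriv v) x
          = ∑ k ∈ Finset.range (ℓ + 1), P.coeff k *
              (iteratedDeriv k (fun y => v y * deriv v y) x
               - iteratedDeriv k v x * deriv v x - v x * iteratedDeriv k (deriv v) x) := by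
        simp only [applyP, hdeg]
        rw [Finset.sum_mul, Finset.mul_sum, ← Finset.sum_sub_distrib, ← Finset.sum_sub_distrib]
        apply Finset.sum_congr rfl
        intro k _
        ring
      have h3 : ∑ k ∈ Finset.range (ℓ + 1), P.coeff k * (if k = 0 then v x * deriv v x else 0)
          = P.coeff 0 * (v x * deriv v x) := by
        simp only [mul_ite, mul_zero]
        rw [Finset.sum_ite_eq' (Finset.range (ℓ + 1)) 0]
        simp
      rw [hsplit, h1, h2, hF]
      have hexp : ∑ k ∈ Finset.range (ℓ + 1), P.coeff k *
            (iteratedDeriv k (fun y => v y * deriv v y) x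
             - iteratedDeriv k v x * deriv v x - v x * iteratedDeriv k (deriv v) x
             + (if k = 0 then v x * deriv v x else 0))
          = (∑ k ∈ Finset.range (ℓ + 1), P.coeff k *
              (iteratedDeriv k (fun y => v y * deriv v y) x
               - iteratedDeriv k v x * deriv v x - v x * iteratedDeriv k (deriv v) x))
            + ∑ k ∈ Finset.range (ℓ + 1), P.coeff k *
                (if k = 0 then v x * deriv v x else 0) := by
        rw [← Finset.sum_add_distrib]
        apply Finset.sum_congr rfl
        intro k _
        ring
      rw [hexp, h3]
      simp only [iteratedDeriv_one, iteratedDeriv_zero]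
      ring
  | succ j ih =>
    intro hj1
    obtain ⟨n, w, A, B, hsupp, heq⟩ := ih (by omega)
    refine ⟨n + n, Fin.append w w, Fin.append (fun t => A t + 1) A,
      Fin.append B (fun t => B t + 1), ?_, ?_⟩
    · intro t
      refine Fin.addCases ?_ ?_ t
      · intro i
        simp only [Fin.append_left]
        rcases hsupp i with h | h
        · left; exact h
        · right; refine ⟨by omega, by omega, by omega⟩
      · intro i
        simp only [Fin.append_right]
        rcases hsupp i with h | h
        · left; exact h
        · right; refine ⟨by omega, by omega, by omega⟩
    · intro v hv x
      have hfun : iteratedDeriv j (fun x => applyP P (fun y => v y * deriv v y) x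
            - applyP P v x * deriv v x - v x * applyP P (deriv v) x)
          = fun y => ∑ t, w t * (iteratedDeriv (A t) v y * iteratedDeriv (B t) v y) :=
        funext (heq v hv)
      rw [iteratedDeriv_succ, hfun]
      have hD : HasDerivAt
          (fun y => ∑ t, w t * (iteratedDeriv (A t) v y * iteratedDeriv (B t) v y))
          (∑ t, w t * (iteratedDeriv (A t + 1) v x * iteratedDeriv (B t) v x
            + iteratedDeriv (A t) v x * iteratedDeriv (B t + 1) v x)) x := by
        apply HasDerivAt.fun_sum
        intro t _
        rcases hsupp t with h | h
        · simp only [h, zero_mul]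
          exact hasDerivAt_const x 0
        · have h1 := hasDerivAt_iter (p := r + 2 * ℓ - 1) (a := A t) hv (by omega) x
          have h2 := hasDerivAt_iter (p := r + 2 * ℓ - 1) (a := B t) hv (by omega) x
          exact (h1.mul h2).const_mul (w t)
      rw [hD.deriv, Fin.sum_univ_add]
      simp only [Fin.append_left, Fin.append_right]
      rw [← Finset.sum_add_distrib]
      apply Finset.sum_congr rfl
      intro t _
      ring

end Helpers

/-- **Commutator bound.**  With `p = r+2ℓ-1`, `q = r+ℓ-1` and `P` of degree `ℓ`, the Lie
commutator `[A,B](v) = P(∂_x)(v v_x) − (P(∂_x)v) v_x − v P(∂_x)(v_x)` satisfies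
`‖[A,B](v)‖_{H^q} ≤ C ‖v‖_{H^p}²` for all `v ∈ H^p`. -/
theorem commutator_bound (r ℓ : ℕ) (hr : 1 ≤ r) (hℓ : 2 ≤ ℓ)
    (P : Polynomial ℝ) (hdeg : P.natDegree = ℓ) :
    ∃ C : ℝ, ∀ v : ℝ → ℝ, MemH (r + 2 * ℓ - 1) v →
      sobolevNorm (r + ℓ - 1)
          (fun x => applyP P (fun y => v y * deriv v y) x
            - applyP P v x * deriv v x - v x * applyP P (deriv v) x)
        ≤ C * (sobolevNorm (r + 2 * ℓ - 1) v) ^ 2 := by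
  have hrep := repr_lemma r ℓ hr hℓ P hdeg
  choose n w A B hsupp heq using hrep
  have hle : ∀ j : Fin (r + ℓ - 1 + 1), (j : ℕ) ≤ r + ℓ - 1 :=
    fun j => Nat.lt_succ_iff.mp j.isLt
  set W : Fin (r + ℓ - 1 + 1) → ℝ := fun j => ∑ t, |w (j : ℕ) (hle j) t| with hWdef
  have hW0 : ∀ j, 0 ≤ W j := fun j => Finset.sum_nonneg fun t _ => abs_nonneg _
  refine ⟨Real.sqrt (∑ j : Fin (r + ℓ - 1 + 1), 2 * W j ^ 2), ?_⟩
  intro v hv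
  obtain ⟨hcd, hlp⟩ := hv
  set N := sobolevNorm (r + 2 * ℓ - 1) v with hN
  have hN0 : 0 ≤ N := Real.sqrt_nonneg _
  have hsum_nonneg : 0 ≤ ∑ k ∈ Finset.range (r + 2 * ℓ - 1 + 1),
      ∫ x : ℝ, (iteratedDeriv k v x) ^ 2 :=
    Finset.sum_nonneg fun k _ => integral_nonneg fun x => sq_nonneg _
  have hNsq : N ^ 2 = ∑ k ∈ Finset.range (r + 2 * ℓ - 1 + 1),
      ∫ x : ℝ, (iteratedDeriv k v x) ^ 2 := by
    rw [hN, sobolevNorm, Real.sq_sqrt hsum_nonneg]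
  have hterm : ∀ m, m ≤ r + 2 * ℓ - 1 → (∫ x : ℝ, (iteratedDeriv m v x) ^ 2) ≤ N ^ 2 := by
    intro m hm
    rw [hNsq]
    apply Finset.single_le_sum (f := fun k => ∫ x : ℝ, (iteratedDeriv k v x) ^ 2)
      (fun k _ => integral_nonneg fun x => sq_nonneg _)
    rw [Finset.mem_range]; omega
  have hsqrt : ∀ m, m ≤ r + 2 * ℓ - 1 →
      Real.sqrt (∫ x : ℝ, (iteratedDeriv m v x) ^ 2) ≤ N := by
    intro m hm
    calc Real.sqrt (∫ x : ℝ, (iteratedDeriv m v x) ^ 2)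
        ≤ Real.sqrt (N ^ 2) := Real.sqrt_le_sqrt (hterm m hm)
      _ = N := Real.sqrt_sq hN0
  have hsup : ∀ m, m + 1 ≤ r + 2 * ℓ - 1 → ∀ x : ℝ,
      |iteratedDeriv m v x| ≤ Real.sqrt 2 * N := by
    intro m hm x
    have h1 := sq_le_of_L2 (contDiff_one_iter hcd hm) (hlp m (by omega))
      (by rw [← iteratedDeriv_succ]; exact hlp (m + 1) hm) x
    rw [show deriv (iteratedDeriv m v) = iteratedDeriv (m + 1) v from
      (iteratedDeriv_succ).symm] at h1
    have h2 : iteratedDeriv m v x ^ 2 ≤ 2 * N ^ 2 := by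
      have a1 := hsqrt m (by omega)
      have a2 := hsqrt (m + 1) hm
      have b1 : 0 ≤ Real.sqrt (∫ y : ℝ, iteratedDeriv m v y ^ 2) := Real.sqrt_nonneg _
      have b2 : 0 ≤ Real.sqrt (∫ y : ℝ, iteratedDeriv (m + 1) v y ^ 2) := Real.sqrt_nonneg _
      nlinarith
    calc |iteratedDeriv m v x| = Real.sqrt (iteratedDeriv m v x ^ 2) :=
          (Real.sqrt_sq_eq_abs _).symm
      _ ≤ Real.sqrt (2 * N ^ 2) := Real.sqrt_le_sqrt h2
      _ = Real.sqrt 2 * N := by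
          rw [Real.sqrt_mul (by norm_num : (0:ℝ) ≤ 2), Real.sqrt_sq hN0]
  have hjint : ∀ j : Fin (r + ℓ - 1 + 1),
      (∫ x : ℝ, (iteratedDeriv (j : ℕ) (fun x => applyP P (fun y => v y * deriv v y) x
          - applyP P v x * deriv v x - v x * applyP P (deriv v) x) x) ^ 2)
        ≤ 2 * W j ^ 2 * N ^ 4 := by
    intro j
    set h := hle j with hh
    set M : Fin (n (j : ℕ) h) → ℕ := fun t =>
      min (if A (j : ℕ) h t ≤ B (j : ℕ) h t then B (j : ℕ) h t else A (j : ℕ) h t)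
        (r + 2 * ℓ - 1) with hM
    have hMle : ∀ t, M t ≤ r + 2 * ℓ - 1 := fun t => min_le_right _ _
    have hpt : ∀ x : ℝ, |iteratedDeriv (j : ℕ) (fun x => applyP P (fun y => v y * deriv v y) x
          - applyP P v x * deriv v x - v x * applyP P (deriv v) x) x|
        ≤ Real.sqrt 2 * N * ∑ t, |w (j : ℕ) h t| * |iteratedDeriv (M t) v x| := by
      intro x
      rw [heq (j : ℕ) h v hcd x]
      calc |∑ t, w (j : ℕ) h t *
              (iteratedDeriv (A (j : ℕ) h t) v x * iteratedDeriv (B (j : ℕ) h t) v x)|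
          ≤ ∑ t, |w (j : ℕ) h t *
              (iteratedDeriv (A (j : ℕ) h t) v x * iteratedDeriv (B (j : ℕ) h t) v x)| :=
            Finset.abs_sum_le_sum_abs _ _
        _ ≤ ∑ t, Real.sqrt 2 * N * (|w (j : ℕ) h t| * |iteratedDeriv (M t) v x|) := by
            apply Finset.sum_le_sum
            intro t _
            rw [abs_mul, abs_mul]
            rcases hsupp (j : ℕ) h t with h0 | hb
            · rw [h0]
              simp
            · obtain ⟨hA, hB, hAB⟩ := hb
              by_cases hab : A (j : ℕ) h t ≤ B (j : ℕ) h t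
              · have hMt : M t = B (j : ℕ) h t := by
                  rw [hM]; dsimp only; rw [if_pos hab]
                  exact min_eq_left (by omega)
                rw [hMt]
                have hbd := hsup (A (j : ℕ) h t) (by omega) x
                calc |w (j : ℕ) h t| * (|iteratedDeriv (A (j : ℕ) h t) v x| *
                        |iteratedDeriv (B (j : ℕ) h t) v x|)
                    ≤ |w (j : ℕ) h t| * ((Real.sqrt 2 * N) *
                        |iteratedDeriv (B (j : ℕ) h t) v x|) := by
                      apply mul_le_mul_of_nonneg_left _ (abs_nonneg _)
                      exact mul_le_mul_of_nonneg_right hbd (abs_nonneg _)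
                  _ = Real.sqrt 2 * N * (|w (j : ℕ) h t| *
                        |iteratedDeriv (B (j : ℕ) h t) v x|) := by ring
              · have hMt : M t = A (j : ℕ) h t := by
                  rw [hM]; dsimp only; rw [if_neg hab]
                  exact min_eq_left (by omega)
                rw [hMt]
                have hbd := hsup (B (j : ℕ) h t) (by omega) x
                calc |w (j : ℕ) h t| * (|iteratedDeriv (A (j : ℕ) h t) v x| *
                        |iteratedDeriv (B (j : ℕ) h t) v x|)
                    ≤ |w (j : ℕ) h t| * (|iteratedDeriv (A (j : ℕ) h t) v x| *
                        (Real.sqrt 2 * N)) := by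
                      apply mul_le_mul_of_nonneg_left _ (abs_nonneg _)
                      exact mul_le_mul_of_nonneg_left hbd (abs_nonneg _)
                  _ = Real.sqrt 2 * N * (|w (j : ℕ) h t| *
                        |iteratedDeriv (A (j : ℕ) h t) v x|) := by ring
        _ = Real.sqrt 2 * N * ∑ t, |w (j : ℕ) h t| * |iteratedDeriv (M t) v x| := by
            rw [Finset.mul_sum]
    have hsq : ∀ x : ℝ, (iteratedDeriv (j : ℕ) (fun x => applyP P (fun y => v y * deriv v y) x
          - applyP P v x * deriv v x - v x * applyP P (deriv v) x) x) ^ 2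
        ≤ 2 * N ^ 2 * W j * ∑ t, |w (j : ℕ) h t| * (iteratedDeriv (M t) v x) ^ 2 := by
      intro x
      have h1 := hpt x
      have hnn : 0 ≤ Real.sqrt 2 * N * ∑ t, |w (j : ℕ) h t| * |iteratedDeriv (M t) v x| := by
        have : 0 ≤ ∑ t, |w (j : ℕ) h t| * |iteratedDeriv (M t) v x| :=
          Finset.sum_nonneg fun t _ => mul_nonneg (abs_nonneg _) (abs_nonneg _)
        positivity
      have h2 : (iteratedDeriv (j : ℕ) (fun x => applyP P (fun y => v y * deriv v y) x
            - applyP P v x * deriv v x - v x * applyP P (deriv v) x) x) ^ 2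
          ≤ (Real.sqrt 2 * N * ∑ t, |w (j : ℕ) h t| * |iteratedDeriv (M t) v x|) ^ 2 := by
        rw [← sq_abs]
        exact pow_le_pow_left₀ (abs_nonneg _) h1 2
      have hWj : W j = ∑ t, |w (j : ℕ) h t| := rfl
      have hCS : (∑ t, |w (j : ℕ) h t| * |iteratedDeriv (M t) v x|) ^ 2
          ≤ W j * ∑ t, |w (j : ℕ) h t| * (iteratedDeriv (M t) v x) ^ 2 := by
        rw [hWj]
        apply Finset.sum_sq_le_sum_mul_sum_of_sq_eq_mul
        · intro t _; exact abs_nonneg _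
        · intro t _; exact mul_nonneg (abs_nonneg _) (sq_nonneg _)
        · intro t _
          rw [mul_pow, sq_abs (iteratedDeriv (M t) v x)]
          ring
      have hexp : (Real.sqrt 2 * N * ∑ t, |w (j : ℕ) h t| * |iteratedDeriv (M t) v x|) ^ 2
          = 2 * N ^ 2 * (∑ t, |w (j : ℕ) h t| * |iteratedDeriv (M t) v x|) ^ 2 := by
        rw [mul_pow, mul_pow, Real.sq_sqrt (by norm_num : (0:ℝ) ≤ 2)]
      have hfin : 2 * N ^ 2 * (∑ t, |w (j : ℕ) h t| * |iteratedDeriv (M t) v x|) ^ 2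
          ≤ 2 * N ^ 2 * (W j * ∑ t, |w (j : ℕ) h t| * (iteratedDeriv (M t) v x) ^ 2) := by
        apply mul_le_mul_of_nonneg_left hCS (by positivity)
      calc (iteratedDeriv (j : ℕ) (fun x => applyP P (fun y => v y * deriv v y) x
            - applyP P v x * deriv v x - v x * applyP P (deriv v) x) x) ^ 2
          ≤ (Real.sqrt 2 * N * ∑ t, |w (j : ℕ) h t| * |iteratedDeriv (M t) v x|) ^ 2 := h2
        _ = 2 * N ^ 2 * (∑ t, |w (j : ℕ) h t| * |iteratedDeriv (M t) v x|) ^ 2 := hexp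
        _ ≤ 2 * N ^ 2 * (W j * ∑ t, |w (j : ℕ) h t| * (iteratedDeriv (M t) v x) ^ 2) := hfin
        _ = 2 * N ^ 2 * W j * ∑ t, |w (j : ℕ) h t| * (iteratedDeriv (M t) v x) ^ 2 := by ring
    have hintg : ∀ t, Integrable (fun x : ℝ => |w (j : ℕ) h t| *
        (iteratedDeriv (M t) v x) ^ 2) volume :=
      fun t => ((hlp (M t) (hMle t)).integrable_sq).const_mul _
    have hint2 : Integrable (fun x : ℝ => 2 * N ^ 2 * W j *
        ∑ t, |w (j : ℕ) h t| * (iteratedDeriv (M t) v x) ^ 2) volume :=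
      (integrable_finset_sum _ fun t _ => hintg t).const_mul _
    have hmono := integral_mono_of_nonneg
      (Filter.Eventually.of_forall fun x => sq_nonneg _) hint2
      (Filter.Eventually.of_forall hsq)
    have heval : (∫ x : ℝ, 2 * N ^ 2 * W j *
        ∑ t, |w (j : ℕ) h t| * (iteratedDeriv (M t) v x) ^ 2) ≤ 2 * W j ^ 2 * N ^ 4 := by
      rw [integral_const_mul, integral_finset_sum _ fun t _ => hintg t]
      have hsum2 : ∑ t, (∫ x : ℝ, |w (j : ℕ) h t| * (iteratedDeriv (M t) v x) ^ 2)
          ≤ W j * N ^ 2 := by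
        rw [hWdef, Finset.sum_mul]
        apply Finset.sum_le_sum
        intro t _
        rw [integral_const_mul]
        exact mul_le_mul_of_nonneg_left (hterm (M t) (hMle t)) (abs_nonneg _)
      calc 2 * N ^ 2 * W j * ∑ t, (∫ x : ℝ, |w (j : ℕ) h t| * (iteratedDeriv (M t) v x) ^ 2)
          ≤ 2 * N ^ 2 * W j * (W j * N ^ 2) := by
            exact mul_le_mul_of_nonneg_left hsum2
              (mul_nonneg (mul_nonneg (by norm_num) (sq_nonneg N)) (hW0 j))
        _ = 2 * W j ^ 2 * N ^ 4 := by ring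
    exact le_trans hmono heval
  rw [sobolevNorm, ← Fin.sum_univ_eq_sum_range]
  calc Real.sqrt (∑ j : Fin (r + ℓ - 1 + 1),
        ∫ x : ℝ, (iteratedDeriv (j : ℕ) (fun x => applyP P (fun y => v y * deriv v y) x
          - applyP P v x * deriv v x - v x * applyP P (deriv v) x) x) ^ 2)
      ≤ Real.sqrt (∑ j : Fin (r + ℓ - 1 + 1), 2 * W j ^ 2 * N ^ 4) :=
        Real.sqrt_le_sqrt (Finset.sum_le_sum fun j _ => hjint j)
    _ = Real.sqrt (∑ j : Fin (r + ℓ - 1 + 1), 2 * W j ^ 2) * N ^ 2 := by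
        rw [← Finset.sum_mul, Real.sqrt_mul (Finset.sum_nonneg fun j _ => by positivity),
          show N ^ 4 = (N ^ 2) ^ 2 by ring, Real.sqrt_sq (sq_nonneg N)]
end

section
/- Let X be a Banach space and let g : T → X be continuously differentiable on the triangle T = {(s,σ) : 0 ≤ σ ≤ s ≤ Δt}. Then ‖(Δt²/2) g(Δt/2, Δt/2) − ∫₀^{Δt} ∫₀^s g(s,σ) dσ ds‖_X ≤ C Δt³ ( max_T ‖∂g/∂s‖_X + max_T ‖∂g/∂σ‖_X ), with C an absolute constant independent of g, X and Δt. -/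
open MeasureTheory Set intervalIntegral

/-- The triangle `{(s,σ) : 0 ≤ σ ≤ s ≤ Δt}`. -/
def triangle (Δt : ℝ) : Set (ℝ × ℝ) :=
  {z : ℝ × ℝ | 0 ≤ z.2 ∧ z.2 ≤ z.1 ∧ z.1 ≤ Δt}

lemma triangle_convex (Δt : ℝ) : Convex ℝ (triangle Δt) := by
  intro x hx y hy a b ha hb hab
  obtain ⟨h1, h2, h3⟩ := hx
  obtain ⟨h4, h5, h6⟩ := hy
  refine ⟨?_, ?_, ?_⟩ <;>
    simp only [Prod.smul_fst, Prod.smul_snd, Prod.fst_add, Prod.snd_add, smul_eq_mul] <;>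
    nlinarith

/-- Projection (retraction) of the plane onto the triangle. -/
noncomputable def triProj (Δt : ℝ) (z : ℝ × ℝ) : ℝ × ℝ :=
  (max 0 (min z.1 Δt), max 0 (min z.2 (max 0 (min z.1 Δt))))

lemma triProj_continuous (Δt : ℝ) : Continuous (triProj Δt) := by
  unfold triProj; fun_prop

lemma triProj_mem (Δt : ℝ) (h : 0 ≤ Δt) (z : ℝ × ℝ) : triProj Δt z ∈ triangle Δt := by
  refine ⟨le_max_left _ _, max_le (le_max_left _ _) (min_le_right _ _), ?_⟩
  exact max_le h (min_le_right _ _)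

lemma triProj_eq_self (Δt : ℝ) {z : ℝ × ℝ} (hz : z ∈ triangle Δt) : triProj Δt z = z := by
  obtain ⟨h1, h2, h3⟩ := hz
  have hs : max 0 (min z.1 Δt) = z.1 := by
    rw [min_eq_left h3, max_eq_right (le_trans h1 h2)]
  unfold triProj
  rw [hs, min_eq_left h2, max_eq_right h1]

/-- **First-order two-dimensional quadrature error bound.**  There is an absolute
constant `C` (independent of `g`, `X` and `Δt`) such that for every Banach space `X`
and every `g : T → X` continuously differentiable on the triangle
`T = {(s,σ) : 0 ≤ σ ≤ s ≤ Δt}`,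
`‖(Δt²/2) g(Δt/2, Δt/2) − ∫₀^{Δt} ∫₀^s g(s,σ) dσ ds‖
  ≤ C Δt³ (max_T ‖∂g/∂s‖ + max_T ‖∂g/∂σ‖)`. -/
theorem two_dimensional_midpoint_quadrature_error :
    ∃ C : ℝ, ∀ (X : Type u) [NormedAddCommGroup X] [NormedSpace ℝ X] [CompleteSpace X],
      ∀ Δt : ℝ, 0 < Δt →
      ∀ (g : ℝ × ℝ → X) (g' : ℝ × ℝ → (ℝ × ℝ) →L[ℝ] X),
        (∀ z ∈ triangle Δt, HasFDerivWithinAt g (g' z) (triangle Δt) z) →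
        ContinuousOn g' (triangle Δt) →
        ∀ Ms Mσ : ℝ,
          (∀ z ∈ triangle Δt, ‖g' z (1, 0)‖ ≤ Ms) →
          (∀ z ∈ triangle Δt, ‖g' z (0, 1)‖ ≤ Mσ) →
          ‖(Δt ^ 2 / 2) • g (Δt / 2, Δt / 2)
              - ∫ s in (0 : ℝ)..Δt, ∫ σ in (0 : ℝ)..s, g (s, σ)‖
            ≤ C * Δt ^ 3 * (Ms + Mσ) := by
  refine ⟨1, fun X _ _ _ Δt hΔt g g' hg hg' Ms Mσ hMs hMσ => ?_⟩
  have hΔt0 : (0:ℝ) ≤ Δt := hΔt.le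
  set c : ℝ × ℝ := (Δt / 2, Δt / 2) with hc
  have hcT : c ∈ triangle Δt := ⟨by simp [hc]; linarith, le_refl _, by simp [hc]; linarith⟩
  set L : ℝ := Ms + Mσ with hL
  have hMs0 : 0 ≤ Ms := le_trans (norm_nonneg _) (hMs c hcT)
  have hMσ0 : 0 ≤ Mσ := le_trans (norm_nonneg _) (hMσ c hcT)
  have hL0 : 0 ≤ L := by positivity
  -- operator norm bound
  have hop : ∀ z ∈ triangle Δt, ‖g' z‖ ≤ L := by
    intro z hz
    refine ContinuousLinearMap.opNorm_le_bound _ hL0 fun v => ?_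
    have hv : v = v.1 • ((1:ℝ), (0:ℝ)) + v.2 • ((0:ℝ), (1:ℝ)) := by ext <;> simp
    have h1 : |v.1| ≤ ‖v‖ := by simpa [Real.norm_eq_abs] using norm_fst_le v
    have h2 : |v.2| ≤ ‖v‖ := by simpa [Real.norm_eq_abs] using norm_snd_le v
    calc ‖g' z v‖ = ‖v.1 • g' z (1, 0) + v.2 • g' z (0, 1)‖ := by
          rw [show g' z v = v.1 • g' z (1, 0) + v.2 • g' z (0, 1) from by
            conv_lhs => rw [hv]
            rw [map_add, (g' z).map_smul, (g' z).map_smul]]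
      _ ≤ ‖v.1 • g' z (1, 0)‖ + ‖v.2 • g' z (0, 1)‖ := norm_add_le _ _
      _ = |v.1| * ‖g' z (1, 0)‖ + |v.2| * ‖g' z (0, 1)‖ := by simp [norm_smul]
      _ ≤ ‖v‖ * Ms + ‖v‖ * Mσ :=
          add_le_add (mul_le_mul h1 (hMs z hz) (norm_nonneg _) (norm_nonneg v))
            (mul_le_mul h2 (hMσ z hz) (norm_nonneg _) (norm_nonneg v))
      _ = L * ‖v‖ := by ring
  -- Lipschitz-type bound on the triangle
  have key : ∀ z ∈ triangle Δt, ‖g z - g c‖ ≤ L * Δt := by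
    intro z hz
    have hmv := (triangle_convex Δt).norm_image_sub_le_of_norm_hasFDerivWithin_le hg hop hcT hz
    refine hmv.trans ?_
    have h1 : ‖z - c‖ ≤ Δt := by
      obtain ⟨h1, h2, h3⟩ := hz
      rw [Prod.norm_def]
      apply max_le <;> rw [Real.norm_eq_abs, abs_le] <;> constructor <;>
        simp only [Prod.fst_sub, Prod.snd_sub, hc] <;> linarith
    nlinarith
  -- continuous extension of g
  set G : ℝ × ℝ → X := g ∘ triProj Δt with hG
  have hgc : ContinuousOn g (triangle Δt) := fun z hz => (hg z hz).continuousWithinAt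
  have hGc : Continuous G :=
    hgc.comp_continuous (triProj_continuous Δt) (triProj_mem Δt hΔt0)
  have hGeq : ∀ z ∈ triangle Δt, G z = g z := fun z hz => by
    simp [hG, triProj_eq_self Δt hz]
  -- the extended inner integral
  set H : ℝ → X := fun s => ∫ σ in (0:ℝ)..s, G (s, σ) with hH
  have hHc : Continuous H := by
    have : Continuous (Function.uncurry fun s σ => G (s, σ)) := by
      exact hGc
    exact continuous_parametric_intervalIntegral_of_continuous (μ := volume)
      (f := fun s σ => G (s, σ)) this continuous_id
  -- membership of slice points
  have hslice : ∀ s ∈ Icc (0:ℝ) Δt, ∀ σ ∈ uIcc (0:ℝ) s, (s, σ) ∈ triangle Δt := by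
    intro s hs σ hσ
    rw [uIcc_of_le hs.1] at hσ
    exact ⟨hσ.1, hσ.2, hs.2⟩
  -- the iterated integral equals ∫ H
  have hiter : (∫ s in (0:ℝ)..Δt, ∫ σ in (0:ℝ)..s, g (s, σ)) = ∫ s in (0:ℝ)..Δt, H s := by
    apply intervalIntegral.integral_congr
    intro s hs
    rw [uIcc_of_le hΔt0] at hs
    apply intervalIntegral.integral_congr
    intro σ hσ
    exact (hGeq _ (hslice s hs σ hσ)).symm
  -- pointwise bound on H minus midpoint
  have hpt : ∀ s ∈ Icc (0:ℝ) Δt, ‖s • g c - H s‖ ≤ L * Δt * Δt := by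
    intro s hs
    have h1 : s • g c = ∫ _ in (0:ℝ)..s, g c := by
      rw [intervalIntegral.integral_const, sub_zero]
    have hGi : IntervalIntegrable (fun σ => G (s, σ)) volume 0 s :=
      (hGc.comp (by fun_prop)).intervalIntegrable _ _
    have h2 : s • g c - H s = ∫ σ in (0:ℝ)..s, (g c - G (s, σ)) := by
      rw [intervalIntegral.integral_sub (intervalIntegrable_const) hGi, ← h1]
    rw [h2]
    have h3 : ‖∫ σ in (0:ℝ)..s, (g c - G (s, σ))‖ ≤ L * Δt * |s - 0| := by
      apply intervalIntegral.norm_integral_le_of_norm_le_const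
      intro σ hσ
      have hmem : (s, σ) ∈ triangle Δt := hslice s hs σ (uIoc_subset_uIcc hσ)
      rw [hGeq _ hmem, norm_sub_rev]
      exact key _ hmem
    refine h3.trans ?_
    rw [sub_zero, abs_of_nonneg hs.1]
    have := mul_le_mul_of_nonneg_left hs.2 (mul_nonneg hL0 hΔt0)
    linarith
  -- assemble
  have hsmul : (Δt ^ 2 / 2) • g c = ∫ s in (0:ℝ)..Δt, s • g c := by
    rw [intervalIntegral.integral_smul_const, integral_id]
    norm_num
  have hsi : IntervalIntegrable (fun s => s • g c) volume 0 Δt := by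
    apply Continuous.intervalIntegrable; fun_prop
  have hHi : IntervalIntegrable H volume 0 Δt := hHc.intervalIntegrable _ _
  have hmain : (Δt ^ 2 / 2) • g c - (∫ s in (0:ℝ)..Δt, H s)
      = ∫ s in (0:ℝ)..Δt, (s • g c - H s) := by
    rw [intervalIntegral.integral_sub hsi hHi, ← hsmul]
  rw [hiter, hmain]
  have hfin : ‖∫ s in (0:ℝ)..Δt, (s • g c - H s)‖ ≤ L * Δt * Δt * |Δt - 0| := by
    apply intervalIntegral.norm_integral_le_of_norm_le_const
    intro s hs
    rw [uIoc_of_le hΔt0] at hs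
    exact hpt s ⟨hs.1.le, hs.2⟩
  refine hfin.trans ?_
  rw [sub_zero, abs_of_nonneg hΔt0]
  ring_nf
  nlinarith [pow_pos hΔt 3]
end
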